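/- arXiv:1612.05178 — 6 statements merged into one kernel-verified Lean document; each statement's English description precedes it below -/
import Mathlib

section
/- Let k ≥ 1, let β_1,…,β_k > 0 and set β = ∑_{i=1}^k β_i. Then there exists a constant C⁺ > 0 such that for every nonempty τ ⊂ {1,…,k} with τ^c ≠ ∅ and every z ∈ (0,∞)^k: ∫_{(0, z_{τ^c})} ‖(z_τ, u)‖₁^{−1−β} ∏_{i ∉ τ} u_i^{−1+β_i} du ≤ C⁺ ‖z_τ‖_∞^{−1−∑_{i∈τ} β_i}. -/
open MeasureTheory Real Set Filter

noncomputable section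

/-!
On the box, `‖(z_τ, u)‖₁ ≥ max M u_j` with `M = ‖z_τ‖_∞`. Splitting the power `-1 - β` of the
norm accordingly, the integrand is dominated by `M ^ (-1 - ∑_τ β)` times a product of
one-variable broken power laws, `M ^ (-β_j) u ^ (β_j - 1)` for `u ≤ M` and `M ^ d u ^ (-1 - d)`
for `u > M`; the small extra decay `d = 1/(k+1)` is paid for by the `1` in the exponent. Each
factor has integral `β_j⁻¹ + d⁻¹` over `(0, ∞)` whatever `M` is, and Fubini finishes.
-/

def l1 {k : ℕ} (v : Fin k → ℝ) : ℝ := ∑ i, |v i|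

/-- The vector `(z_τ, u)` having components `z i` for `i ∈ τ` and `u i` for `i ∉ τ`. -/
def combine {k : ℕ} (τ : Finset (Fin k)) (z : Fin k → ℝ)
    (u : {i : Fin k // i ∉ τ} → ℝ) : Fin k → ℝ :=
  fun i => if h : i ∈ τ then z i else u ⟨i, h⟩

def brokenPower (M p d u : ℝ) : ℝ := M ^ d * max M u ^ (-(p + d)) * u ^ (-1 + p)

lemma brokenPower_nonneg {M u : ℝ} (hM : 0 ≤ M) (hu : 0 ≤ u) (p d : ℝ) :
    0 ≤ brokenPower M p d u := by
  unfold brokenPower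
  have : 0 ≤ max M u := le_max_of_le_left hM
  positivity

lemma brokenPower_of_le {M u : ℝ} (hu : 0 < u) (huM : u ≤ M) (p d : ℝ) :
    brokenPower M p d u = M ^ (-p) * u ^ (-1 + p) := by
  rw [brokenPower, max_eq_left huM, ← rpow_add (hu.trans_le huM)]
  ring_nf

lemma brokenPower_of_lt {M u : ℝ} (hM : 0 < M) (hMu : M < u) (p d : ℝ) :
    brokenPower M p d u = M ^ d * u ^ (-1 - d) := by
  rw [brokenPower, max_eq_right hMu.le, mul_assoc, ← rpow_add (hM.trans hMu)]
  ring_nf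

lemma integrableOn_brokenPower {M p d : ℝ} (hM : 0 < M) (hp : 0 < p) (hd : 0 < d) :
    IntegrableOn (brokenPower M p d) (Ioi 0) := by
  rw [← Ioc_union_Ioi_eq_Ioi hM.le]
  refine IntegrableOn.union ?_ ?_
  · refine IntegrableOn.congr_fun ?_ (fun u hu => (brokenPower_of_le hu.1 hu.2 p d).symm)
      measurableSet_Ioc
    refine Integrable.const_mul ?_ _
    rw [← IntegrableOn, ← intervalIntegrable_iff_integrableOn_Ioc_of_le hM.le]
    exact intervalIntegral.intervalIntegrable_rpow' (by linarith)
  · refine IntegrableOn.congr_fun ?_ (fun u hu => (brokenPower_of_lt hM hu p d).symm)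
      measurableSet_Ioi
    exact (integrableOn_Ioi_rpow_of_lt (by linarith) hM).const_mul _

lemma setIntegral_brokenPower {M p d : ℝ} (hM : 0 < M) (hp : 0 < p) (hd : 0 < d) :
    ∫ u in Ioi 0, brokenPower M p d u = p⁻¹ + d⁻¹ := by
  have hint := integrableOn_brokenPower hM hp hd
  rw [← Ioc_union_Ioi_eq_Ioi hM.le] at hint ⊢
  rw [setIntegral_union Ioc_disjoint_Ioi_same measurableSet_Ioi
    (hint.mono_set subset_union_left) (hint.mono_set subset_union_right),
    setIntegral_congr_fun measurableSet_Ioc (fun u hu => brokenPower_of_le hu.1 hu.2 p d),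
    setIntegral_congr_fun measurableSet_Ioi (fun u hu => brokenPower_of_lt hM hu p d),
    integral_const_mul, integral_const_mul, ← intervalIntegral.integral_of_le hM.le,
    integral_rpow (Or.inl (by linarith)), integral_Ioi_rpow_of_lt (by linarith) hM,
    zero_rpow (by linarith)]
  have h1 : M ^ (-p) * M ^ p = 1 := by rw [← rpow_add hM]; simp
  have h2 : M ^ d * M ^ (-d) = 1 := by rw [← rpow_add hM]; simp
  rw [show -1 + p + 1 = p by ring, show -1 - d + 1 = -d by ring, sub_zero, mul_div_assoc', h1,
    neg_div_neg_eq, mul_div_assoc', h2, one_div, one_div]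

lemma rpow_mul_prod_rpow_le_prod_brokenPower {ι : Type*} [Fintype ι] {p u : ι → ℝ}
    {M L s d : ℝ} (hM : 0 < M) (hML : M ≤ L) (hu : ∀ j, 0 < u j) (huL : ∀ j, u j ≤ L)
    (hpd : ∀ j, 0 ≤ p j + d) (hcard : Fintype.card ι * d ≤ 1 + s) :
    L ^ (-1 - (s + ∑ j, p j)) * ∏ j, u j ^ (-1 + p j)
      ≤ M ^ (-1 - s) * ∏ j, brokenPower M (p j) d (u j) := by
  have hL : 0 < L := hM.trans_le hML
  have key : L ^ (-1 - (s + ∑ j, p j))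
      ≤ M ^ (-1 - s) * ∏ j, (M ^ d * max M (u j) ^ (-(p j + d))) :=
    calc L ^ (-1 - (s + ∑ j, p j))
        = L ^ (-(1 + s - Fintype.card ι * d)) * ∏ j, L ^ (-(p j + d)) := by
          rw [← rpow_sum_of_pos hL, ← rpow_add hL]
          congr 1
          simp only [Finset.sum_neg_distrib, Finset.sum_add_distrib, Finset.sum_const,
            Finset.card_univ, nsmul_eq_mul]
          ring
      _ ≤ M ^ (-(1 + s - Fintype.card ι * d)) * ∏ j, max M (u j) ^ (-(p j + d)) := by
          refine mul_le_mul (rpow_le_rpow_of_nonpos hM hML (by linarith)) ?_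
            (Finset.prod_nonneg fun j _ => rpow_nonneg hL.le _) (rpow_nonneg hM.le _)
          exact Finset.prod_le_prod (fun j _ => rpow_nonneg hL.le _) fun j _ =>
            rpow_le_rpow_of_nonpos (hM.trans_le (le_max_left _ _)) (max_le hML (huL j))
              (by linarith [hpd j])
      _ = M ^ (-1 - s) * ∏ j, (M ^ d * max M (u j) ^ (-(p j + d))) := by
          rw [Finset.prod_mul_distrib, Finset.prod_const, Finset.card_univ, ← rpow_natCast,
            ← rpow_mul hM.le, ← mul_assoc, ← rpow_add hM]
          ring_nf
  calc L ^ (-1 - (s + ∑ j, p j)) * ∏ j, u j ^ (-1 + p j)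
      ≤ (M ^ (-1 - s) * ∏ j, (M ^ d * max M (u j) ^ (-(p j + d)))) * ∏ j, u j ^ (-1 + p j) :=
        mul_le_mul_of_nonneg_right key (Finset.prod_nonneg fun j _ => (rpow_pos_of_pos (hu j) _).le)
    _ = M ^ (-1 - s) * ∏ j, brokenPower M (p j) d (u j) := by
        simp only [brokenPower, Finset.prod_mul_distrib]
        ring

theorem setIntegral_rpow_mul_prod_rpow_le {ι : Type*} [Fintype ι] {S : Set (ι → ℝ)}
    (hS : MeasurableSet S) (hS_pos : ∀ u ∈ S, ∀ j, 0 < u j) {L : (ι → ℝ) → ℝ} {p : ι → ℝ}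
    {M s d : ℝ} (hM : 0 < M) (hp : ∀ j, 0 < p j) (hd : 0 < d)
    (hcard : Fintype.card ι * d ≤ 1 + s) (hML : ∀ u ∈ S, M ≤ L u)
    (huL : ∀ u ∈ S, ∀ j, u j ≤ L u) :
    ∫ u in S, L u ^ (-1 - (s + ∑ j, p j)) * ∏ j, u j ^ (-1 + p j)
      ≤ M ^ (-1 - s) * ∏ j, ((p j)⁻¹ + d⁻¹) := by
  set P : Set (ι → ℝ) := univ.pi fun _ => Ioi 0
  have hSP : S ⊆ P := fun u hu j _ => hS_pos u hu j
  have hG : IntegrableOn (fun u : ι → ℝ => M ^ (-1 - s) * ∏ j, brokenPower M (p j) d (u j)) P := by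
    refine Integrable.const_mul ?_ _
    rw [volume_pi, Measure.restrict_pi_pi]
    exact Integrable.fintype_prod fun j => integrableOn_brokenPower hM (hp j) hd
  have hG_nonneg : ∀ u ∈ P, 0 ≤ M ^ (-1 - s) * ∏ j, brokenPower M (p j) d (u j) :=
    fun u hu => mul_nonneg (rpow_nonneg hM.le _) <|
      Finset.prod_nonneg fun j _ => brokenPower_nonneg hM.le (le_of_lt (hu j trivial)) _ _
  -- `integral_mono_of_nonneg` does not need the left-hand integrand to be integrable.
  calc ∫ u in S, L u ^ (-1 - (s + ∑ j, p j)) * ∏ j, u j ^ (-1 + p j)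
      ≤ ∫ u in S, M ^ (-1 - s) * ∏ j, brokenPower M (p j) d (u j) := by
        refine integral_mono_of_nonneg (ae_restrict_of_forall_mem hS fun u hu => ?_)
          (hG.mono_set hSP) (ae_restrict_of_forall_mem hS fun u hu => ?_)
        · exact mul_nonneg (rpow_nonneg (hM.trans_le (hML u hu)).le _)
            (Finset.prod_nonneg fun j _ => rpow_nonneg (hS_pos u hu j).le _)
        · exact rpow_mul_prod_rpow_le_prod_brokenPower hM (hML u hu) (hS_pos u hu) (huL u hu)
            (fun j => by linarith [hp j]) hcard
    _ ≤ ∫ u in P, M ^ (-1 - s) * ∏ j, brokenPower M (p j) d (u j) :=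
        setIntegral_mono_set hG
          (ae_restrict_of_forall_mem (MeasurableSet.univ_pi fun _ => measurableSet_Ioi) hG_nonneg)
          hSP.eventuallyLE
    _ = M ^ (-1 - s) * ∏ j, ((p j)⁻¹ + d⁻¹) := by
        rw [integral_const_mul, volume_pi, Measure.restrict_pi_pi, integral_fintype_prod_eq_prod]
        simp_rw [setIntegral_brokenPower hM (hp _) hd]

lemma measurableSet_setOf_forall_pos_lt {ι : Type*} [Countable ι] (b : ι → ℝ) :
    MeasurableSet {u : ι → ℝ | ∀ j, 0 < u j ∧ u j < b j} := by
  simpa only [Set.pi, Set.mem_univ, true_implies, Set.mem_Ioo] using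
    MeasurableSet.univ_pi fun j => measurableSet_Ioo (a := 0) (b := b j)

lemma sum_eq_sum_add_sum_subtype_notMem {α : Type*} [Fintype α] [DecidableEq α] (s : Finset α)
    (f : α → ℝ) : ∑ i, f i = ∑ i ∈ s, f i + ∑ j : {i // i ∉ s}, f j := by
  rw [← Fintype.sum_subtype_add_sum_subtype (· ∈ s) f, Finset.sum_subtype s (fun _ => Iff.rfl) f]

lemma prod_subtype_le_prod_of_one_le {α : Type*} [Fintype α] (P : α → Prop) [DecidablePred P]
    {f : α → ℝ} (hf : ∀ i, 1 ≤ f i) : ∏ j : {i // P i}, f j ≤ ∏ i, f i := by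
  rw [← Fintype.prod_subtype_mul_prod_subtype P f]
  exact le_mul_of_one_le_right (Finset.prod_nonneg fun j _ => zero_le_one.trans (hf j))
    (Finset.one_le_prod fun j _ => hf j)

lemma abs_le_l1 {k : ℕ} (v : Fin k → ℝ) (i : Fin k) : |v i| ≤ l1 v :=
  Finset.single_le_sum (f := fun i => |v i|) (fun _ _ => abs_nonneg _) (Finset.mem_univ i)

lemma combine_of_mem {k : ℕ} {τ : Finset (Fin k)} (z : Fin k → ℝ) (u : {i : Fin k // i ∉ τ} → ℝ)
    {i : Fin k} (hi : i ∈ τ) : combine τ z u i = z i :=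
  dif_pos hi

lemma combine_coe {k : ℕ} {τ : Finset (Fin k)} (z : Fin k → ℝ) (u : {i : Fin k // i ∉ τ} → ℝ)
    (j : {i : Fin k // i ∉ τ}) : combine τ z u j = u j :=
  dif_neg j.2

lemma sup'_le_l1_combine {k : ℕ} {τ : Finset (Fin k)} (hτ : τ.Nonempty) (z : Fin k → ℝ)
    (u : {i : Fin k // i ∉ τ} → ℝ) : τ.sup' hτ z ≤ l1 (combine τ z u) :=
  Finset.sup'_le hτ z fun i hi =>
    (le_abs_self (z i)).trans <| combine_of_mem z u hi ▸ abs_le_l1 (combine τ z u) i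

lemma le_l1_combine {k : ℕ} (τ : Finset (Fin k)) (z : Fin k → ℝ)
    (u : {i : Fin k // i ∉ τ} → ℝ) (j : {i : Fin k // i ∉ τ}) : u j ≤ l1 (combine τ z u) :=
  (le_abs_self (u j)).trans <| combine_coe z u j ▸ abs_le_l1 (combine τ z u) j

theorem stmt3_general {k : ℕ} (β : Fin k → ℝ) (hβ : ∀ i, 0 < β i) :
    ∃ C : ℝ, 0 < C ∧
      ∀ τ : Finset (Fin k), ∀ hτ : τ.Nonempty, τᶜ.Nonempty →
        ∀ z : Fin k → ℝ, (∀ i, 0 < z i) →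
          (∫ u in {u : {i : Fin k // i ∉ τ} → ℝ | ∀ j, 0 < u j ∧ u j < z j.1},
              (l1 (combine τ z u)) ^ (-1 - ∑ i, β i)
                * ∏ j : {i : Fin k // i ∉ τ}, (u j) ^ (-1 + β j.1))
            ≤ C * (τ.sup' hτ z) ^ (-1 - ∑ i ∈ τ, β i) := by
  have hfactor (i : Fin k) : 1 ≤ (β i)⁻¹ + ((k : ℝ) + 1) :=
    le_add_of_nonneg_of_le (inv_pos.2 (hβ i)).le (le_add_of_nonneg_left k.cast_nonneg)
  refine ⟨∏ i, ((β i)⁻¹ + ((k : ℝ) + 1)),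
    Finset.prod_pos fun i _ => one_pos.trans_le (hfactor i), fun τ hτ _ z hz => ?_⟩
  obtain ⟨i₀, hi₀⟩ := id hτ
  have hM : 0 < τ.sup' hτ z := (hz i₀).trans_le (Finset.le_sup' z hi₀)
  have hcard : (Fintype.card {i : Fin k // i ∉ τ} : ℝ) * ((k : ℝ) + 1)⁻¹ ≤ 1 + ∑ i ∈ τ, β i :=
    calc (Fintype.card {i : Fin k // i ∉ τ} : ℝ) * ((k : ℝ) + 1)⁻¹ ≤ 1 := by
          rw [← div_eq_mul_inv, div_le_one (by positivity)]
          exact_mod_cast ((Fintype.card_subtype_le _).trans_eq (Fintype.card_fin k)).trans k.le_succ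
      _ ≤ 1 + ∑ i ∈ τ, β i := le_add_of_nonneg_right (Finset.sum_nonneg fun i _ => (hβ i).le)
  rw [sum_eq_sum_add_sum_subtype_notMem τ β]
  calc _ ≤ (τ.sup' hτ z) ^ (-1 - ∑ i ∈ τ, β i)
        * ∏ j : {i : Fin k // i ∉ τ}, ((β j.1)⁻¹ + ((k : ℝ) + 1)⁻¹⁻¹) :=
        setIntegral_rpow_mul_prod_rpow_le (measurableSet_setOf_forall_pos_lt _)
          (fun u hu j => (hu j).1) hM (fun j => hβ j.1) (by positivity) hcard
          (fun u _ => sup'_le_l1_combine hτ z u) (fun u _ => le_l1_combine τ z u)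
    _ ≤ (∏ i, ((β i)⁻¹ + ((k : ℝ) + 1))) * (τ.sup' hτ z) ^ (-1 - ∑ i ∈ τ, β i) := by
        rw [inv_inv, mul_comm]
        exact mul_le_mul_of_nonneg_right (prod_subtype_le_prod_of_one_le (· ∉ τ) hfactor)
          (rpow_nonneg hM.le _)

/-- upper bound of Lemma 1 of the paper.  For `β₁,…,β_k > 0` and
`β = ∑ βᵢ`, there is `C⁺ > 0` such that for every nonempty `τ ⊊ {1,…,k}` and `z ∈ (0,∞)^k`,
`∫_{(0,z_{τᶜ})} ‖(z_τ,u)‖₁^{−1−β} ∏_{i∉τ} uᵢ^{−1+βᵢ} du ≤ C⁺ ‖z_τ‖_∞^{−1−∑_{i∈τ} βᵢ}`. -/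
theorem stmt3 {k : ℕ} (hk : 1 ≤ k) (β : Fin k → ℝ) (hβ : ∀ i, 0 < β i) :
    ∃ C : ℝ, 0 < C ∧
      ∀ τ : Finset (Fin k), ∀ hτ : τ.Nonempty, τᶜ.Nonempty →
        ∀ z : Fin k → ℝ, (∀ i, 0 < z i) →
          (∫ u in {u : {i : Fin k // i ∉ τ} → ℝ | ∀ j, 0 < u j ∧ u j < z j.1},
              (l1 (combine τ z u)) ^ (-1 - ∑ i, β i)
                * ∏ j : {i : Fin k // i ∉ τ}, (u j) ^ (-1 + β j.1))
            ≤ C * (τ.sup' hτ z) ^ (-1 - ∑ i ∈ τ, β i) :=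
  stmt3_general β hβ

end
end

section
/- Let k ≥ 2 and let h : int(S^{k−1}) → [0,∞) be measurable. Then for every r > 0 and every Borel set B ⊂ int(S^{k−1}): ∫_{{z ∈ (0,∞)^k : ‖z‖₁ > r, z/‖z‖₁ ∈ B}} k ‖z‖₁^{−k−1} h(z/‖z‖₁) dz = k r^{−1} ∫_B h(w) σ(dw), where dz is k-dimensional Lebesgue measure and σ is the (k−1)-dimensional Lebesgue measure on the simplex obtained as the image of Lebesgue measure on {(w_1,…,w_{k−1}) ∈ (0,1)^{k−1} : ∑_{i<k} w_i < 1} under (w_1,…,w_{k−1}) ↦ (w_1,…,w_{k−1}, 1 − ∑_{i<k} w_i). -/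
open MeasureTheory Real Set Filter

noncomputable section

/-- The interior of the unit simplex `S^{k−1}`. -/
def intSimplex (k : ℕ) : Set (Fin k → ℝ) := {w | (∀ i, 0 < w i) ∧ ∑ i, w i = 1}

/-- The parametrization `(w₁,…,w_{k−1}) ↦ (w₁,…,w_{k−1}, 1 − ∑_{i<k} wᵢ)` of the simplex. -/
def simplexParam (k : ℕ) (w : Fin (k - 1) → ℝ) : Fin k → ℝ :=
  fun i => if h : (i : ℕ) < k - 1 then w ⟨i.1, h⟩ else 1 - ∑ j, w j

/-- The `(k−1)`-dimensional Lebesgue measure `σ` on the (interior of the) simplex, i.e. the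
image under `simplexParam` of Lebesgue measure on
`{(w₁,…,w_{k−1}) ∈ (0,1)^{k−1} : ∑ wᵢ < 1}`. -/
noncomputable def simplexMeasure (k : ℕ) : Measure (Fin k → ℝ) :=
  Measure.map (simplexParam k)
    (volume.restrict {w : Fin (k - 1) → ℝ | (∀ j, 0 < w j) ∧ ∑ j, w j < 1})

/-! Write `z = t · p(w)`, where `t = ‖z‖₁`, `w ∈ (0,1)^{k-1}` with `∑ wᵢ < 1`, and `p` is the
parametrization `simplexParam` of the simplex. The map `(w, t) ↦ t · p(w)` is a shear composed with
`(w, t) ↦ (t w, t)`, so its Jacobian is `t^{k-1}`. The change of variables therefore turns the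
density `k t^{-k-1} h(p(w))` into `k t^{-2} h(p(w))`, a product of a function of `t` and a function
of `w`, and Fubini gives `∫_r^∞ k t^{-2} dt · ∫_B h dσ = k r⁻¹ ∫_B h dσ`. -/

open scoped ENNReal

section

variable {n : ℕ}

lemma setLIntegral_last_init_mul {α : Type*} [MeasureSpace α] [SigmaFinite (volume : Measure α)]
    {S : Set α} {W : Set (Fin n → α)} {F : α → ℝ≥0∞} {G : (Fin n → α) → ℝ≥0∞}
    (hF : AEMeasurable F (volume.restrict S)) (hG : AEMeasurable G (volume.restrict W)) :
    ∫⁻ x in {x : Fin (n + 1) → α | x (Fin.last n) ∈ S ∧ Fin.init x ∈ W},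
        F (x (Fin.last n)) * G (Fin.init x)
      = (∫⁻ t in S, F t) * ∫⁻ w in W, G w := by
  let e := MeasurableEquiv.piFinSuccAbove (fun _ : Fin (n + 1) => α) (Fin.last n)
  have he : ∀ x, e x = (x (Fin.last n), Fin.init x) := fun x => by
    ext j
    · rfl
    · simp [e, Fin.init]
  have hset :
      {x : Fin (n + 1) → α | x (Fin.last n) ∈ S ∧ Fin.init x ∈ W} = e ⁻¹' (S ×ˢ W) := by
    ext x; simp [he]
  rw [hset]
  calc ∫⁻ x in e ⁻¹' (S ×ˢ W), F (x (Fin.last n)) * G (Fin.init x)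
      = ∫⁻ x in e ⁻¹' (S ×ˢ W), (fun p => F p.1 * G p.2) (e x) := by simp only [he]
    _ = ∫⁻ p in S ×ˢ W, F p.1 * G p.2 :=
      (volume_preserving_piFinSuccAbove _ _).setLIntegral_comp_preimage_emb
        e.measurableEmbedding (fun p => F p.1 * G p.2) (S ×ˢ W)
    _ = (∫⁻ t in S, F t) * ∫⁻ w in W, G w := by
      rw [Measure.volume_eq_prod, ← Measure.prod_restrict, lintegral_prod_mul hF hG]

lemma lintegral_Ioi_rpow_of_lt {a c : ℝ} (ha : a < -1) (hc : 0 < c) :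
    ∫⁻ t in Ioi c, ENNReal.ofReal (t ^ a) = ENNReal.ofReal (-c ^ (a + 1) / (a + 1)) := by
  rw [← ofReal_integral_eq_lintegral_ofReal (integrableOn_Ioi_rpow_of_lt ha hc),
    integral_Ioi_rpow_of_lt ha hc]
  filter_upwards [ae_restrict_mem measurableSet_Ioi] with t ht
  exact rpow_nonneg (hc.trans ht).le a

@[simp]
lemma simplexParam_castSucc (w : Fin n → ℝ) (j : Fin n) :
    simplexParam (n + 1) w j.castSucc = w j :=
  dif_pos j.isLt

@[simp]
lemma simplexParam_last (w : Fin n → ℝ) :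
    simplexParam (n + 1) w (Fin.last n) = 1 - ∑ j, w j :=
  dif_neg (by simp)

lemma sum_simplexParam (w : Fin n → ℝ) : ∑ i, simplexParam (n + 1) w i = 1 := by
  simp [Fin.sum_univ_castSucc]

lemma measurable_simplexParam (k : ℕ) : Measurable (simplexParam k) := by
  refine measurable_pi_lambda _ fun i => ?_
  unfold simplexParam
  split_ifs <;> fun_prop

def openCornerSimplex (n : ℕ) : Set (Fin n → ℝ) := {w | (∀ j, 0 < w j) ∧ ∑ j, w j < 1}

lemma measurableSet_openCornerSimplex : MeasurableSet (openCornerSimplex n) := by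
  refine measurableSet_setOfPred.2 (Measurable.and ?_ ?_)
  · exact Measurable.forall fun j =>
      measurableSet_setOfPred.1 (measurableSet_lt measurable_const (measurable_pi_apply j))
  · exact measurableSet_setOfPred.1 (measurableSet_lt (by fun_prop) measurable_const)

lemma forall_simplexParam_pos_iff {w : Fin n → ℝ} :
    (∀ i, 0 < simplexParam (n + 1) w i) ↔ w ∈ openCornerSimplex n := by
  simp [Fin.forall_fin_succ', openCornerSimplex]

lemma l1_eq_sum {k : ℕ} {z : Fin k → ℝ} (hz : ∀ i, 0 ≤ z i) : l1 z = ∑ i, z i :=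
  Finset.sum_congr rfl fun i _ => abs_of_nonneg (hz i)

lemma setLIntegral_simplexMeasure {B : Set (Fin (n + 1) → ℝ)} (hB : MeasurableSet B)
    {g : (Fin (n + 1) → ℝ) → ℝ≥0∞} (hg : Measurable g) :
    ∫⁻ w in B, g w ∂simplexMeasure (n + 1)
      = ∫⁻ w : Fin n → ℝ in simplexParam (n + 1) ⁻¹' B ∩ openCornerSimplex n,
          g (simplexParam (n + 1) w) := by
  rw [simplexMeasure, setLIntegral_map hB hg (measurable_simplexParam _),
    Measure.restrict_restrict (hB.preimage (measurable_simplexParam _))]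
  rfl

def simplexPolar (n : ℕ) (x : Fin (n + 1) → ℝ) : Fin (n + 1) → ℝ :=
  x (Fin.last n) • simplexParam (n + 1) (Fin.init x)

lemma sum_simplexPolar (x : Fin (n + 1) → ℝ) : ∑ i, simplexPolar n x i = x (Fin.last n) := by
  simp [simplexPolar, ← Finset.mul_sum, sum_simplexParam]

lemma simplexPolar_snoc_inv_smul_init {s : ℝ} (hs : s ≠ 0) {z : Fin (n + 1) → ℝ}
    (hz : ∑ i, z i = s) :
    simplexPolar n (Fin.snoc (s⁻¹ • Fin.init z) s) = z := by
  funext i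
  induction i using Fin.lastCases with
  | last =>
    rw [Fin.sum_univ_castSucc] at hz
    simp only [simplexPolar, Fin.init_snoc, Fin.snoc_last, Pi.smul_apply, simplexParam_last,
      smul_eq_mul, ← Finset.mul_sum]
    rw [mul_sub, mul_one, ← mul_assoc, mul_inv_cancel₀ hs, one_mul]
    simp only [Fin.init]
    linarith
  | cast j => simp [simplexPolar, Fin.init, hs]

lemma simplexPolar_injOn : InjOn (simplexPolar n) {x | x (Fin.last n) ≠ 0} := by
  intro x hx y _ hxy
  have hlast : x (Fin.last n) = y (Fin.last n) := by
    simpa [sum_simplexPolar] using congrArg (fun z => ∑ i, z i) hxy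
  rw [← Fin.snoc_init_self x, ← Fin.snoc_init_self y, hlast]
  congr 1
  funext j
  have := congrFun hxy j.castSucc
  simp only [simplexPolar, Pi.smul_apply, simplexParam_castSucc, smul_eq_mul, hlast] at this
  exact mul_left_cancel₀ (hlast ▸ hx) this

lemma simplexPolar_pos {x : Fin (n + 1) → ℝ} (ht : 0 < x (Fin.last n))
    (hx : Fin.init x ∈ openCornerSimplex n) (i : Fin (n + 1)) : 0 < simplexPolar n x i :=
  mul_pos ht (forall_simplexParam_pos_iff.2 hx i)

lemma l1_simplexPolar {x : Fin (n + 1) → ℝ} (ht : 0 < x (Fin.last n))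
    (hx : Fin.init x ∈ openCornerSimplex n) : l1 (simplexPolar n x) = x (Fin.last n) := by
  rw [l1_eq_sum fun i => (simplexPolar_pos ht hx i).le, sum_simplexPolar]

lemma simplexPolar_div_l1 {x : Fin (n + 1) → ℝ} (ht : 0 < x (Fin.last n))
    (hx : Fin.init x ∈ openCornerSimplex n) :
    (fun i => simplexPolar n x i / l1 (simplexPolar n x)) = simplexParam (n + 1) (Fin.init x) := by
  funext i
  rw [l1_simplexPolar ht hx, simplexPolar, Pi.smul_apply, smul_eq_mul,
    mul_div_cancel_left₀ _ ht.ne']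

lemma simplexPolar_image {r : ℝ} (hr : 0 ≤ r) (B : Set (Fin (n + 1) → ℝ)) :
    simplexPolar n '' {x | x (Fin.last n) ∈ Ioi r ∧
        Fin.init x ∈ simplexParam (n + 1) ⁻¹' B ∩ openCornerSimplex n}
      = {z | (∀ i, 0 < z i) ∧ r < l1 z ∧ (fun i => z i / l1 z) ∈ B} := by
  ext z
  constructor
  · rintro ⟨x, ⟨hrt, hxB, hx⟩, rfl⟩
    have ht : 0 < x (Fin.last n) := hr.trans_lt hrt
    exact ⟨simplexPolar_pos ht hx, by rwa [l1_simplexPolar ht hx],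
      by rwa [simplexPolar_div_l1 ht hx]⟩
  · rintro ⟨hz, hrz, hzB⟩
    have hs : 0 < l1 z := hr.trans_lt hrz
    set x : Fin (n + 1) → ℝ := Fin.snoc ((l1 z)⁻¹ • Fin.init z) (l1 z)
    have hxz : simplexPolar n x = z :=
      simplexPolar_snoc_inv_smul_init hs.ne' (l1_eq_sum fun i => (hz i).le).symm
    have hparam : simplexParam (n + 1) (Fin.init x) = fun i => z i / l1 z := by
      funext i
      have hxl : x (Fin.last n) = l1 z := Fin.snoc_last _ _
      rw [← congrFun hxz i, simplexPolar, Pi.smul_apply, smul_eq_mul, hxl,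
        mul_div_cancel_left₀ _ hs.ne']
    refine ⟨x, ⟨by simpa [x] using hrz, by simpa [hparam] using hzB, ?_⟩, hxz⟩
    rw [← forall_simplexParam_pos_iff, hparam]
    exact fun i => div_pos (hz i) hs

def lastShear (n : ℕ) : (Fin (n + 1) → ℝ) →ₗ[ℝ] (Fin (n + 1) → ℝ) where
  toFun y := Fin.snoc (Fin.init y) (y (Fin.last n) - ∑ j : Fin n, y j.castSucc)
  map_add' y y' := by
    ext i
    induction i using Fin.lastCases with
    | last => simp only [Fin.snoc_last, Pi.add_apply, Finset.sum_add_distrib]; ring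
    | cast j => simp [Fin.init]
  map_smul' c y := by
    ext i
    induction i using Fin.lastCases with
    | last => simp only [Fin.snoc_last, Pi.smul_apply, smul_eq_mul, mul_sub, Finset.mul_sum]; rfl
    | cast j => simp [Fin.init]

def polarScaleDeriv (x : Fin (n + 1) → ℝ) : (Fin (n + 1) → ℝ) →ₗ[ℝ] (Fin (n + 1) → ℝ) where
  toFun v :=
    Fin.snoc (x (Fin.last n) • Fin.init v + v (Fin.last n) • Fin.init x) (v (Fin.last n))
  map_add' v v' := by
    ext i
    induction i using Fin.lastCases with
    | last => simp
    | cast j => simp [Fin.init]; ring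
  map_smul' c v := by
    ext i
    induction i using Fin.lastCases with
    | last => simp
    | cast j => simp [Fin.init]; ring

lemma det_lastShear : (lastShear n).det = 1 := by
  rw [← LinearMap.det_toMatrix']
  have htri : (LinearMap.toMatrix' (lastShear n)).IsLowerTriangular := by
    intro i j (hij : i < j)
    induction i using Fin.lastCases with
    | last => exact absurd hij (Fin.le_last j).not_gt
    | cast a => simp [lastShear, Fin.init, hij.ne]
  rw [Matrix.det_of_isLowerTriangular _ htri]
  refine Finset.prod_eq_one fun i _ => ?_
  induction i using Fin.lastCases <;>
    simp [lastShear, LinearMap.toMatrix'_apply, Fin.init, Pi.single_apply]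

lemma det_polarScaleDeriv (x : Fin (n + 1) → ℝ) :
    (polarScaleDeriv x).det = x (Fin.last n) ^ n := by
  rw [← LinearMap.det_toMatrix']
  have htri : (LinearMap.toMatrix' (polarScaleDeriv x)).IsUpperTriangular := by
    intro i j (hij : j < i)
    have hj : j ≠ Fin.last n := (hij.trans_le (Fin.le_last i)).ne
    induction i using Fin.lastCases with
    | last => simp [polarScaleDeriv, hj.symm]
    | cast a => simp [polarScaleDeriv, Fin.init, hij.ne', hj.symm]
  rw [Matrix.det_of_isUpperTriangular htri, Fin.prod_univ_castSucc]
  simp [polarScaleDeriv, LinearMap.toMatrix'_apply, Fin.init]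

def polarScale (n : ℕ) (y : Fin (n + 1) → ℝ) : Fin (n + 1) → ℝ :=
  Fin.snoc (y (Fin.last n) • Fin.init y) (y (Fin.last n))

lemma lastShear_comp_polarScale : lastShear n ∘ polarScale n = simplexPolar n := by
  ext y i
  induction i using Fin.lastCases <;>
    simp [lastShear, polarScale, simplexPolar, Fin.init, mul_sub, Finset.mul_sum]

lemma hasFDerivAt_polarScale (x : Fin (n + 1) → ℝ) :
    HasFDerivAt (polarScale n) (polarScaleDeriv x).toContinuousLinearMap x := by
  rw [hasFDerivAt_pi']
  intro i
  induction i using Fin.lastCases with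
  | last =>
    simp only [polarScale, Fin.snoc_last]
    refine (hasFDerivAt_apply _ x).congr_fderiv ?_
    ext v
    simp [polarScaleDeriv]
  | cast a =>
    simp only [polarScale, Fin.snoc_castSucc]
    refine ((hasFDerivAt_apply (Fin.last n) x).mul (hasFDerivAt_apply a.castSucc x)).congr_fderiv ?_
    ext v
    simp [polarScaleDeriv, Fin.init]
    ring

def simplexPolarDeriv (x : Fin (n + 1) → ℝ) :
    (Fin (n + 1) → ℝ) →L[ℝ] (Fin (n + 1) → ℝ) :=
  (lastShear n ∘ₗ polarScaleDeriv x).toContinuousLinearMap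

lemma hasFDerivAt_simplexPolar (x : Fin (n + 1) → ℝ) :
    HasFDerivAt (simplexPolar n) (simplexPolarDeriv x) x := by
  rw [← lastShear_comp_polarScale]
  exact (lastShear n).toContinuousLinearMap.hasFDerivAt.comp x (hasFDerivAt_polarScale x)

lemma det_simplexPolarDeriv (x : Fin (n + 1) → ℝ) :
    (simplexPolarDeriv x).det = x (Fin.last n) ^ n := by
  rw [simplexPolarDeriv, ContinuousLinearMap.det, LinearMap.coe_toContinuousLinearMap,
    LinearMap.det_comp, det_lastShear, det_polarScaleDeriv, one_mul]

lemma abs_det_simplexPolarDeriv_mul_density {x : Fin (n + 1) → ℝ} (ht : 0 < x (Fin.last n))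
    (hx : Fin.init x ∈ openCornerSimplex n) (g : (Fin (n + 1) → ℝ) → ℝ) :
    ENNReal.ofReal |(simplexPolarDeriv x).det|
        * ENNReal.ofReal (((n + 1 : ℕ) : ℝ) * l1 (simplexPolar n x) ^ (-((n + 1 : ℕ) : ℝ) - 1)
          * g (fun i => simplexPolar n x i / l1 (simplexPolar n x)))
      = ENNReal.ofReal ((n + 1 : ℕ) : ℝ) * ENNReal.ofReal (x (Fin.last n) ^ (-2 : ℝ))
          * ENNReal.ofReal (g (simplexParam (n + 1) (Fin.init x))) := by
  have hpow : x (Fin.last n) ^ n * x (Fin.last n) ^ (-((n + 1 : ℕ) : ℝ) - 1)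
      = x (Fin.last n) ^ (-2 : ℝ) := by
    rw [← rpow_natCast, ← rpow_add ht]
    congr 1
    push_cast
    ring
  rw [det_simplexPolarDeriv, simplexPolar_div_l1 ht hx, l1_simplexPolar ht hx,
    abs_of_pos (pow_pos ht n), ← ENNReal.ofReal_mul (by positivity),
    ← ENNReal.ofReal_mul (by positivity), ← ENNReal.ofReal_mul (by positivity), ← hpow]
  congr 1
  ring

end

theorem stmt5_general {k : ℕ} (hk : 2 ≤ k) (h : (Fin k → ℝ) → ℝ)
    (hmeas : Measurable h)
    (r : ℝ) (hr : 0 < r) (B : Set (Fin k → ℝ)) (hB : MeasurableSet B) :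
    ∫⁻ z in {z : Fin k → ℝ | (∀ i, 0 < z i) ∧ r < l1 z ∧ (fun i => z i / l1 z) ∈ B},
        ENNReal.ofReal ((k : ℝ) * (l1 z) ^ (-(k : ℝ) - 1) * h (fun i => z i / l1 z))
      = ENNReal.ofReal ((k : ℝ) * r⁻¹) * ∫⁻ w in B, ENNReal.ofReal (h w) ∂(simplexMeasure k) := by
  obtain ⟨n, rfl⟩ : ∃ n, k = n + 1 := ⟨k - 1, by omega⟩
  have hD : MeasurableSet {x : Fin (n + 1) → ℝ | x (Fin.last n) ∈ Ioi r ∧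
      Fin.init x ∈ simplexParam (n + 1) ⁻¹' B ∩ openCornerSimplex n} :=
    (measurableSet_Ioi.preimage (measurable_pi_apply _)).inter
      (((hB.preimage (measurable_simplexParam _)).inter measurableSet_openCornerSimplex).preimage
        (measurable_pi_lambda _ fun j => measurable_pi_apply _))
  rw [← simplexPolar_image hr.le, lintegral_image_eq_lintegral_abs_det_fderiv_mul volume hD
      (fun x _ => (hasFDerivAt_simplexPolar x).hasFDerivWithinAt)
      (simplexPolar_injOn.mono fun x hx => (hr.trans hx.1).ne'),
    setLIntegral_congr_fun hD fun x hx =>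
      abs_det_simplexPolarDeriv_mul_density (hr.trans hx.1) hx.2.2 h,
    setLIntegral_last_init_mul
      (F := fun t => ENNReal.ofReal ((n + 1 : ℕ) : ℝ) * ENNReal.ofReal (t ^ (-2 : ℝ)))
      (G := fun w : Fin n → ℝ => ENNReal.ofReal (h (simplexParam (n + 1) w))) (by fun_prop)
      (hmeas.comp (measurable_simplexParam (n + 1))).ennreal_ofReal.aemeasurable,
    lintegral_const_mul' _ _ ENNReal.ofReal_ne_top, lintegral_Ioi_rpow_of_lt (by norm_num) hr,
    setLIntegral_simplexMeasure hB hmeas.ennreal_ofReal, ← ENNReal.ofReal_mul (by positivity)]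
  norm_num [rpow_neg_one]

/-- the polar decomposition \eqref{eq:H} with densities.  For measurable
`h : int(S^{k−1}) → [0,∞)`, every `r > 0` and every Borel `B ⊆ int(S^{k−1})`,
`∫_{{z ∈ (0,∞)^k : ‖z‖₁ > r, z/‖z‖₁ ∈ B}} k ‖z‖₁^{−k−1} h(z/‖z‖₁) dz = k r⁻¹ ∫_B h dσ`. -/
theorem stmt5 {k : ℕ} (hk : 2 ≤ k) (h : (Fin k → ℝ) → ℝ)
    (hmeas : Measurable h) (hnonneg : ∀ w ∈ intSimplex k, 0 ≤ h w)
    (r : ℝ) (hr : 0 < r) (B : Set (Fin k → ℝ)) (hB : MeasurableSet B)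
    (hBsub : B ⊆ intSimplex k) :
    ∫⁻ z in {z : Fin k → ℝ | (∀ i, 0 < z i) ∧ r < l1 z ∧ (fun i => z i / l1 z) ∈ B},
        ENNReal.ofReal ((k : ℝ) * (l1 z) ^ (-(k : ℝ) - 1) * h (fun i => z i / l1 z))
      = ENNReal.ofReal ((k : ℝ) * r⁻¹) * ∫⁻ w in B, ENNReal.ofReal (h w) ∂(simplexMeasure k) :=
  stmt5_general hk h hmeas r hr B hB

end
end

section
/- For θ ∈ (0,1) let V_θ(z) = ( ∑_{j=1}^k z_j^{−1/θ} )^θ on (0,∞)^k. Then for every nonempty τ ⊂ {1,…,k} and every z ∈ (0,∞)^k, the mixed partial derivative ∂_τ V_θ of V_θ with respect to the variables z_i, i ∈ τ, satisfies −∂_τ V_θ(z) = ∏_{i=1}^{|τ|−1} ( i/θ − 1 ) · ( ∑_{j=1}^k z_j^{−1/θ} )^{θ−|τ|} · ∏_{i ∈ τ} z_i^{−1/θ−1}, where the empty product (for |τ| = 1) equals 1. -/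
open MeasureTheory Real Set Filter

noncomputable section

/-- Iterated (mixed) partial derivative of `V` with respect to the coordinates in `τ`,
each exactly once. -/
noncomputable def mixedPartial {k : ℕ} (τ : Finset (Fin k)) (V : (Fin k → ℝ) → ℝ) :
    (Fin k → ℝ) → ℝ :=
  τ.toList.foldr (fun i F z => deriv (fun t => F (Function.update z i t)) (z i)) V

/-- The logistic exponent function `V_θ(z) = (∑ⱼ zⱼ^{−1/θ})^θ`. -/
noncomputable def Vlog {k : ℕ} (θ : ℝ) (z : Fin k → ℝ) : ℝ :=
  (∑ j, (z j) ^ (-1/θ)) ^ θ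

noncomputable def Plog (θ : ℝ) (m : ℕ) : ℝ :=
  ∏ i ∈ Finset.range m, ((θ - i) * (-1/θ))

lemma aux_foldr {k : ℕ} (θ : ℝ) (hθ0 : 0 < θ)
    (L : List (Fin k)) (hL : L.Nodup) :
    ∀ z : Fin k → ℝ, (∀ i, 0 < z i) →
      L.foldr (fun i F z => deriv (fun t => F (Function.update z i t)) (z i)) (Vlog θ) z
        = Plog θ L.length * (∑ j, (z j) ^ (-1/θ)) ^ (θ - (L.length : ℝ))
          * (L.map (fun i => (z i) ^ (-1/θ - 1))).prod := by
  induction L with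
  | nil => intro z hz; simp [Vlog, Plog]
  | cons i L ih =>
    intro z hz
    obtain ⟨hiL, hnd⟩ := List.nodup_cons.mp hL
    set p : ℝ := -1/θ with hp
    set n : ℕ := L.length with hn
    set C : ℝ := ∑ j ∈ Finset.univ \ {i}, (z j) ^ p with hC
    have hC0 : 0 ≤ C := Finset.sum_nonneg fun j _ => (Real.rpow_pos_of_pos (hz j) p).le
    set K : ℝ := (L.map (fun j => (z j) ^ (p - 1))).prod with hK
    -- the sum after updating coordinate i
    have hsum : ∀ t : ℝ, (∑ j, (Function.update z i t j) ^ p) = t ^ p + C := by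
      intro t
      have : (fun j => (Function.update z i t j) ^ p)
          = Function.update (fun j => (z j) ^ p) i (t ^ p) := by
        funext j
        exact Function.apply_update (fun _ v => v ^ p) z i t j
      rw [this, Finset.sum_update_of_mem (Finset.mem_univ i)]
    have hSz : (∑ j, (z j) ^ p) = (z i) ^ p + C := by
      have := hsum (z i)
      rwa [Function.update_eq_self] at this
    have hS0 : 0 < (z i) ^ p + C :=
      add_pos_of_pos_of_nonneg (Real.rpow_pos_of_pos (hz i) p) hC0
    -- eventual equality near z i
    have hev : (fun t => L.foldr
          (fun i F z => deriv (fun t => F (Function.update z i t)) (z i)) (Vlog θ)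
          (Function.update z i t))
        =ᶠ[nhds (z i)] fun t => Plog θ n * (C + t ^ p) ^ (θ - (n : ℝ)) * K := by
      filter_upwards [Ioi_mem_nhds (hz i)] with t ht
      have hzt : ∀ j, 0 < Function.update z i t j := by
        intro j
        rcases eq_or_ne j i with rfl | hji
        · simpa using ht
        · simpa [Function.update_of_ne hji] using hz j
      rw [ih hnd (Function.update z i t) hzt]
      have h1 : (∑ j, (Function.update z i t j) ^ p) = C + t ^ p := by
        rw [hsum t]; ring
      have h2 : (L.map (fun j => (Function.update z i t j) ^ (p - 1))).prod = K := by
        rw [hK]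
        congr 1
        refine List.map_congr_left fun j hj => ?_
        have : j ≠ i := fun h => hiL (h ▸ hj)
        rw [Function.update_of_ne this]
      rw [h1, h2]
    -- derivative of the closed form
    have hne : (z i) ^ p + C ≠ 0 := hS0.ne'
    have hd1 : HasDerivAt (fun t : ℝ => t ^ p) (p * (z i) ^ (p - 1)) (z i) :=
      Real.hasDerivAt_rpow_const (Or.inl (hz i).ne')
    have hd2 : HasDerivAt (fun u : ℝ => (C + u) ^ (θ - (n : ℝ)))
        ((θ - (n : ℝ)) * (C + (z i) ^ p) ^ (θ - (n : ℝ) - 1) * 1) ((z i) ^ p) := by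
      have hbase : HasDerivAt (fun u : ℝ => C + u) 1 ((z i) ^ p) :=
        (hasDerivAt_id ((z i) ^ p)).const_add C
      have hpow : HasDerivAt (fun y : ℝ => y ^ (θ - (n : ℝ)))
          ((θ - (n : ℝ)) * (C + (z i) ^ p) ^ (θ - (n : ℝ) - 1)) (C + (z i) ^ p) :=
        Real.hasDerivAt_rpow_const (Or.inl (by rw [add_comm] at hne; exact fun h => hne (by linarith [h] )))
      exact hpow.comp _ hbase
    have hd : HasDerivAt (fun t : ℝ => Plog θ n * (C + t ^ p) ^ (θ - (n : ℝ)) * K)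
        (Plog θ n * ((θ - (n : ℝ)) * (C + (z i) ^ p) ^ (θ - (n : ℝ) - 1) * 1
          * (p * (z i) ^ (p - 1))) * K) (z i) :=
      by have h3 := hd2.comp (z i) hd1; exact ((h3).const_mul (Plog θ n)).mul_const K
    -- compute the foldr at the cons
    show deriv (fun t => L.foldr
          (fun i F z => deriv (fun t => F (Function.update z i t)) (z i)) (Vlog θ)
          (Function.update z i t)) (z i) = _
    rw [hev.deriv_eq, hd.deriv]
    -- algebra
    have hPl : Plog θ (n + 1) = Plog θ n * ((θ - n) * (-1/θ)) := by
      rw [Plog, Finset.prod_range_succ]; rfl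
    have hlen : ((i :: L) : List (Fin k)).length = n + 1 := by simp [hn]
    rw [hlen]
    have hcast : ((n + 1 : ℕ) : ℝ) = (n : ℝ) + 1 := by push_cast; ring
    rw [hcast]
    have hexp : (θ - (n : ℝ) - 1) = θ - ((n : ℝ) + 1) := by ring
    rw [List.map_cons, List.prod_cons, ← hK, hPl, add_comm C ((z i) ^ p) , ← hexp, ← hSz]
    ring
  

/-- For the logistic exponent function, the mixed partial derivative with
respect to the variables `zᵢ`, `i ∈ τ`, is given by
`−∂_τ V_θ(z) = ∏_{i=1}^{|τ|−1}(i/θ − 1) · (∑ⱼ zⱼ^{−1/θ})^{θ−|τ|} · ∏_{i∈τ} zᵢ^{−1/θ−1}`. -/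
theorem stmt10 {k : ℕ} (θ : ℝ) (hθ : θ ∈ Set.Ioo (0 : ℝ) 1)
    (τ : Finset (Fin k)) (hτ : τ.Nonempty)
    (z : Fin k → ℝ) (hz : ∀ i, 0 < z i) :
    - mixedPartial τ (Vlog θ) z
      = (∏ i ∈ Finset.range (τ.card - 1), ((i + 1 : ℝ) / θ - 1))
        * (∑ j, (z j) ^ (-1/θ)) ^ (θ - (τ.card : ℝ))
        * ∏ i ∈ τ, (z i) ^ (-1/θ - 1) := by
  obtain ⟨hθ0, hθ1⟩ := hθ
  have hθne : θ ≠ 0 := hθ0.ne'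
  have h := aux_foldr θ hθ0 τ.toList τ.nodup_toList z hz
  rw [Finset.length_toList, Finset.prod_map_toList] at h
  rw [mixedPartial, h]
  obtain ⟨n, hcard⟩ : ∃ n, τ.card = n + 1 :=
    ⟨τ.card - 1, (Nat.succ_pred_eq_of_pos (Finset.card_pos.mpr hτ)).symm⟩
  have hP : - Plog θ τ.card = ∏ i ∈ Finset.range (τ.card - 1), ((i + 1 : ℝ) / θ - 1) := by
    rw [hcard]
    simp only [Nat.add_sub_cancel]
    rw [Plog, Finset.prod_range_succ']
    have h0 : (θ - (0 : ℕ)) * (-1/θ) = -1 := by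
      push_cast; field_simp; ring
    rw [h0]
    have : ∀ i ∈ Finset.range n, (θ - ((i : ℕ) + 1 : ℕ)) * (-1/θ) = ((i : ℝ) + 1) / θ - 1 := by
      intro i _
      push_cast
      field_simp
      ring
    rw [Finset.prod_congr rfl this]
    ring
  rw [← hP]
  ring

end
end

section
/- For θ ∈ (0,1) let V_θ(z) = ( ∑_{j=1}^k z_j^{−1/θ} )^θ on (0,∞)^k. Then for every θ0 ∈ (0,1) there exist a neighborhood Θ0 ⊂ (0,1) of θ0, a constant A > 0 and an exponent α ∈ (0,1/2) such that for all θ ∈ Θ0, all z ∈ (0,∞)^k with ‖z‖_∞ = 1 and all nonempty τ ⊂ {1,…,k}: |∂_θ log V_θ(z)| ≤ A ∑_{i=1}^k z_i^{−α} and |∂_θ log( −∂_τ V_θ(z) )| ≤ A ∑_{i=1}^k z_i^{−α}. -/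
/-! Differentiating once in each `z_i`, `i ∈ τ`, gives the closed form
`∂_τ V_θ(z) = c_{|τ|}(θ) S_θ(z)^{θ-|τ|} ∏_{i∈τ} z_i^{-1/θ-1}` with `S_θ(z) = ∑ⱼ zⱼ^{-1/θ}`,
so both logarithms are explicit functions of `θ`. Their `θ`-derivatives only involve
`log S_θ`, `∂_θ S_θ / S_θ` (a weighted mean of the `log zⱼ / θ²`), `∑_{i∈τ} log z_i` and
`∂_θ log(-c_m)`. For `0 < z ≤ 1` all of these are bounded by constants plus multiples of
`∑ⱼ |log zⱼ| ≤ 4 ∑ⱼ zⱼ^{-1/4}`, with constants that stay bounded for `θ` in a compact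
subinterval of `(0, 1)`. -/

open MeasureTheory Real Set Filter

noncomputable section

/-- The factor `i = 0` is `-1`, so for `m ≥ 1` this is the paper's `-∏_{i=1}^{m-1} (i/θ - 1)`. -/
def logisticCoeff (θ : ℝ) (m : ℕ) : ℝ := ∏ i ∈ Finset.range m, ((i : ℝ) / θ - 1)

def logisticSum {k : ℕ} (z : Fin k → ℝ) (θ : ℝ) : ℝ := ∑ j, z j ^ (-1 / θ)

lemma Vlog_eq_logisticSum_rpow (θ : ℝ) {k : ℕ} (z : Fin k → ℝ) :
    Vlog θ z = logisticSum z θ ^ θ :=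
  rfl

lemma logisticCoeff_succ (θ : ℝ) (m : ℕ) :
    logisticCoeff θ (m + 1) = logisticCoeff θ m * (m / θ - 1) :=
  Finset.prod_range_succ _ _

lemma logisticSum_pos {k : ℕ} [Nonempty (Fin k)] {z : Fin k → ℝ} (hz : ∀ i, 0 < z i)
    (θ : ℝ) : 0 < logisticSum z θ :=
  Finset.sum_pos (fun j _ => Real.rpow_pos_of_pos (hz j) _) Finset.univ_nonempty

lemma logisticSum_update {k : ℕ} (z : Fin k → ℝ) (θ : ℝ) (i : Fin k) (t : ℝ) :
    logisticSum (Function.update z i t) θ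
      = ∑ j ∈ Finset.univ.erase i, z j ^ (-1 / θ) + t ^ (-1 / θ) := by
  rw [logisticSum, ← Finset.add_sum_erase _ _ (Finset.mem_univ i), add_comm]
  congr 1
  · exact Finset.sum_congr rfl fun j hj => by rw [Function.update_of_ne (Finset.ne_of_mem_erase hj)]
  · simp

lemma foldr_partial_Vlog {k : ℕ} {θ : ℝ} (hθ : θ ≠ 0) (l : List (Fin k)) (hl : l.Nodup)
    (z : Fin k → ℝ) (hz : ∀ i, 0 < z i) :
    l.foldr (fun i F z => deriv (fun t => F (Function.update z i t)) (z i)) (Vlog θ) z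
      = logisticCoeff θ l.length * logisticSum z θ ^ (θ - l.length)
          * (l.map fun i => z i ^ (-1 / θ - 1)).prod := by
  induction l generalizing z with
  | nil => simp [logisticCoeff, Vlog_eq_logisticSum_rpow]
  | cons i l ih =>
    obtain ⟨hil, hl⟩ := List.nodup_cons.mp hl
    set p := -1 / θ
    set m := l.length
    set B := ∑ j ∈ Finset.univ.erase i, z j ^ p
    set K := (l.map fun j => z j ^ (p - 1)).prod
    have hB : 0 < B + z i ^ p := add_pos_of_nonneg_of_pos
      (Finset.sum_nonneg fun j _ => (Real.rpow_pos_of_pos (hz j) p).le)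
      (Real.rpow_pos_of_pos (hz i) p)
    have hS : B + z i ^ p = logisticSum z θ := by
      simpa only [Function.update_eq_self] using (logisticSum_update z θ i (z i)).symm
    have hlocal : (fun t => l.foldr (fun i F z => deriv (fun t => F (Function.update z i t)) (z i))
          (Vlog θ) (Function.update z i t))
        =ᶠ[nhds (z i)] fun t => logisticCoeff θ m * (B + t ^ p) ^ (θ - m) * K := by
      filter_upwards [eventually_gt_nhds (hz i)] with t ht
      have hzt : ∀ j, 0 < Function.update z i t j := by
        intro j
        rcases eq_or_ne j i with rfl | hj
        · simpa using ht
        · simpa [Function.update_of_ne hj] using hz j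
      rw [ih hl _ hzt, logisticSum_update]
      congr 2
      exact List.map_congr_left fun j hj =>
        by rw [Function.update_of_ne (ne_of_mem_of_not_mem hj hil)]
    have hderiv : HasDerivAt (fun t => logisticCoeff θ m * (B + t ^ p) ^ (θ - m) * K)
        (logisticCoeff θ m * (p * z i ^ (p - 1) * (θ - m) * (B + z i ^ p) ^ (θ - m - 1)) * K)
        (z i) :=
      ((((Real.hasDerivAt_rpow_const (Or.inl (hz i).ne')).const_add B).rpow_const
        (Or.inl hB.ne')).const_mul _).mul_const K
    rw [List.foldr_cons, hlocal.deriv_eq, hderiv.deriv, hS, List.map_cons, List.prod_cons,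
      List.length_cons, logisticCoeff_succ]
    have hpm : p * (θ - m) = m / θ - 1 := by simp only [p]; field_simp; ring
    push_cast
    rw [show θ - (m + 1) = θ - m - 1 by ring, ← hpm]
    ring

lemma mixedPartial_Vlog {k : ℕ} {θ : ℝ} (hθ : θ ≠ 0) (τ : Finset (Fin k)) {z : Fin k → ℝ}
    (hz : ∀ i, 0 < z i) :
    mixedPartial τ (Vlog θ) z
      = logisticCoeff θ τ.card * logisticSum z θ ^ (θ - τ.card) * ∏ i ∈ τ, z i ^ (-1 / θ - 1) := by
  rw [mixedPartial, foldr_partial_Vlog hθ _ τ.nodup_toList z hz, Finset.length_toList,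
    Finset.prod_map_toList]

lemma neg_logisticCoeff_succ {θ : ℝ} (hθ : θ ≠ 0) (n : ℕ) :
    -logisticCoeff θ (n + 1) = ∏ i ∈ Finset.range n, ((i + 1 - θ) / θ) := by
  rw [logisticCoeff, Finset.prod_range_succ']
  simp only [Nat.cast_add, Nat.cast_one, Nat.cast_zero, zero_div, zero_sub, mul_neg, mul_one,
    neg_neg]
  exact Finset.prod_congr rfl fun i _ => by field_simp

lemma log_neg_logisticCoeff_succ {θ : ℝ} (hθ : θ ∈ Ioo (0 : ℝ) 1) (n : ℕ) :
    log (-logisticCoeff θ (n + 1))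
      = ∑ i ∈ Finset.range n, (log (i + 1 - θ) - log θ) := by
  have hfac : ∀ i : ℕ, 0 < (i : ℝ) + 1 - θ := fun i => by
    linarith [hθ.2, i.cast_nonneg (α := ℝ)]
  rw [neg_logisticCoeff_succ hθ.1.ne', Real.log_prod fun i _ => (div_pos (hfac i) hθ.1).ne']
  exact Finset.sum_congr rfl fun i _ => Real.log_div (hfac i).ne' hθ.1.ne'

lemma log_neg_mixedPartial_Vlog {k : ℕ} [Nonempty (Fin k)] {θ : ℝ} (hθ : θ ∈ Ioo (0 : ℝ) 1)
    {τ : Finset (Fin k)} (hτ : τ.Nonempty) {z : Fin k → ℝ} (hz : ∀ i, 0 < z i) :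
    log (-mixedPartial τ (Vlog θ) z)
      = ∑ i ∈ Finset.range (τ.card - 1), (log (i + 1 - θ) - log θ)
        + (θ - τ.card) * log (logisticSum z θ) + (-1 / θ - 1) * ∑ i ∈ τ, log (z i) := by
  obtain ⟨n, hn⟩ : ∃ n, τ.card = n + 1 := Nat.exists_eq_add_one.mpr (Finset.card_pos.mpr hτ)
  have hS := logisticSum_pos hz θ
  have hc : 0 < -logisticCoeff θ (n + 1) := by
    rw [neg_logisticCoeff_succ hθ.1.ne']
    exact Finset.prod_pos fun i _ => div_pos (by linarith [hθ.2, i.cast_nonneg (α := ℝ)]) hθ.1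
  have hprod : ∀ i ∈ τ, z i ^ (-1 / θ - 1) ≠ 0 := fun i _ => (Real.rpow_pos_of_pos (hz i) _).ne'
  rw [mixedPartial_Vlog hθ.1.ne' τ hz, hn, ← neg_mul, ← neg_mul, ← log_neg_logisticCoeff_succ hθ,
    Real.log_mul (by positivity) (Finset.prod_ne_zero_iff.mpr hprod),
    Real.log_mul hc.ne' (Real.rpow_pos_of_pos hS _).ne', Real.log_rpow hS,
    Real.log_prod hprod, Finset.mul_sum]
  simp only [Real.log_rpow (hz _), Nat.add_sub_cancel]

def logisticSumDeriv {k : ℕ} (z : Fin k → ℝ) (θ : ℝ) : ℝ :=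
  ∑ j, z j ^ (-1 / θ) * log (z j) / θ ^ 2

lemma hasDerivAt_logisticSum {k : ℕ} {θ : ℝ} (hθ : θ ≠ 0) {z : Fin k → ℝ}
    (hz : ∀ i, 0 < z i) : HasDerivAt (logisticSum z) (logisticSumDeriv z θ) θ := by
  have hinv : HasDerivAt (fun θ : ℝ => -1 / θ) (1 / θ ^ 2) θ := by
    simpa [neg_div, one_div] using (hasDerivAt_inv hθ).fun_neg
  refine HasDerivAt.fun_sum fun j _ => ?_
  exact ((Real.hasStrictDerivAt_const_rpow (hz j) (-1 / θ)).hasDerivAt.comp θ hinv).congr_deriv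
    (by ring)

lemma hasDerivAt_log_Vlog {k : ℕ} [Nonempty (Fin k)] {θ : ℝ} (hθ : 0 < θ) {z : Fin k → ℝ}
    (hz : ∀ i, 0 < z i) :
    HasDerivAt (fun θ => log (Vlog θ z))
      (log (logisticSum z θ) + θ * (logisticSumDeriv z θ / logisticSum z θ)) θ := by
  have hlog := (hasDerivAt_logisticSum hθ.ne' hz).log (logisticSum_pos hz θ).ne'
  refine ((hasDerivAt_id θ).mul hlog).congr_of_eventuallyEq ?_ |>.congr_deriv (by simp)
  exact Filter.Eventually.of_forall fun θ' => by
    simp [Vlog_eq_logisticSum_rpow, Real.log_rpow (logisticSum_pos hz θ')]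

lemma hasDerivAt_log_neg_mixedPartial_Vlog {k : ℕ} [Nonempty (Fin k)] {θ : ℝ}
    (hθ : θ ∈ Ioo (0 : ℝ) 1) {τ : Finset (Fin k)} (hτ : τ.Nonempty) {z : Fin k → ℝ}
    (hz : ∀ i, 0 < z i) :
    HasDerivAt (fun θ => log (-mixedPartial τ (Vlog θ) z))
      (-∑ i ∈ Finset.range (τ.card - 1), (1 / (i + 1 - θ) + 1 / θ)
        + (log (logisticSum z θ) + (θ - τ.card) * (logisticSumDeriv z θ / logisticSum z θ))
        + 1 / θ ^ 2 * ∑ i ∈ τ, log (z i)) θ := by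
  have hcoeff : HasDerivAt (fun θ => ∑ i ∈ Finset.range (τ.card - 1),
      (log (i + 1 - θ) - log θ))
      (-∑ i ∈ Finset.range (τ.card - 1), (1 / (i + 1 - θ) + 1 / θ)) θ := by
    rw [← Finset.sum_neg_distrib]
    refine HasDerivAt.fun_sum fun i _ => ?_
    have hi : (i : ℝ) + 1 - θ ≠ 0 := by linarith [hθ.2, i.cast_nonneg (α := ℝ)]
    convert (((hasDerivAt_id' θ).const_sub ((i : ℝ) + 1)).log hi).fun_sub
      (Real.hasDerivAt_log hθ.1.ne') using 1
    ring
  have hlog := (hasDerivAt_logisticSum hθ.1.ne' hz).log (logisticSum_pos hz θ).ne'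
  have hpow : HasDerivAt (fun θ : ℝ => -1 / θ - 1) (1 / θ ^ 2) θ := by
    simpa [neg_div, one_div] using ((hasDerivAt_inv hθ.1.ne').fun_neg).sub_const 1
  have hsum := (hcoeff.fun_add ((((hasDerivAt_id θ).sub_const (τ.card : ℝ)).fun_mul hlog))).fun_add
    (hpow.mul_const (∑ i ∈ τ, log (z i)))
  refine (hsum.congr_deriv (by simp)).congr_of_eventuallyEq ?_
  filter_upwards [isOpen_Ioo.mem_nhds hθ] with θ' hθ'
  exact log_neg_mixedPartial_Vlog hθ' hτ hz

lemma one_le_logisticSum {k : ℕ} [Nonempty (Fin k)] {θ : ℝ} (hθ : 0 < θ) {z : Fin k → ℝ}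
    (hz : ∀ i, 0 < z i) (hz1 : ∀ i, z i ≤ 1) : 1 ≤ logisticSum z θ := by
  obtain ⟨j⟩ := ‹Nonempty (Fin k)›
  calc 1 ≤ z j ^ (-1 / θ) :=
        Real.one_le_rpow_of_pos_of_le_one_of_nonpos (hz j) (hz1 j) (by rw [neg_div]; simp [hθ.le])
    _ ≤ logisticSum z θ :=
        Finset.single_le_sum (fun l _ => (Real.rpow_pos_of_pos (hz l) _).le) (Finset.mem_univ j)

lemma log_logisticSum_le {k : ℕ} [Nonempty (Fin k)] {θ : ℝ} (hθ : 0 < θ) {z : Fin k → ℝ}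
    (hz : ∀ i, 0 < z i) :
    log (logisticSum z θ) ≤ log k + (∑ j, |log (z j)|) / θ := by
  have hterm : ∀ j, z j ^ (-1 / θ) ≤ Real.exp ((∑ j, |log (z j)|) / θ) := fun j => by
    rw [Real.rpow_def_of_pos (hz j), Real.exp_le_exp, mul_div, mul_neg_one, neg_div, ← neg_div]
    gcongr
    exact (neg_le_abs _).trans
      (Finset.single_le_sum (fun l _ => abs_nonneg (log (z l))) (Finset.mem_univ j))
  have hk : (0 : ℝ) < k := by exact_mod_cast Fin.pos_iff_nonempty.mpr ‹_›
  calc log (logisticSum z θ)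
      ≤ log (k * Real.exp ((∑ j, |log (z j)|) / θ)) := by
        refine Real.log_le_log (logisticSum_pos hz θ) ?_
        simpa [logisticSum] using Finset.sum_le_sum fun j (_ : j ∈ Finset.univ) => hterm j
    _ = log k + (∑ j, |log (z j)|) / θ := by
        rw [Real.log_mul hk.ne' (Real.exp_pos _).ne', Real.log_exp]

lemma abs_logisticSumDeriv_div_le {k : ℕ} [Nonempty (Fin k)] {θ : ℝ} {z : Fin k → ℝ}
    (hz : ∀ i, 0 < z i) :
    |logisticSumDeriv z θ / logisticSum z θ| ≤ (∑ j, |log (z j)|) / θ ^ 2 := by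
  have hS := logisticSum_pos hz θ
  rw [abs_div, abs_of_pos hS, div_le_iff₀ hS, div_mul_eq_mul_div, mul_comm _ (logisticSum z θ),
    logisticSumDeriv, logisticSum, Finset.sum_mul, Finset.sum_div]
  refine (Finset.abs_sum_le_sum_abs _ _).trans (Finset.sum_le_sum fun j _ => ?_)
  rw [abs_div, abs_mul, abs_of_pos (Real.rpow_pos_of_pos (hz j) _), abs_of_nonneg (sq_nonneg θ)]
  gcongr
  · exact (Real.rpow_pos_of_pos (hz j) _).le
  · exact Finset.single_le_sum (fun l _ => abs_nonneg (log (z l))) (Finset.mem_univ j)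

lemma abs_log_le_four_mul_rpow {x : ℝ} (hx : 0 < x) (hx1 : x ≤ 1) :
    |log x| ≤ 4 * x ^ (-(1 / 4 : ℝ)) := by
  have h := (Real.abs_log_mul_self_rpow_lt x (1 / 4) hx hx1 (by norm_num)).le
  have hx4 := Real.rpow_pos_of_pos hx (1 / 4)
  rw [abs_mul, abs_of_pos hx4, ← le_div_iff₀ hx4] at h
  rw [Real.rpow_neg hx.le]
  simpa [div_eq_mul_inv] using h

lemma abs_deriv_log_Vlog_le {k : ℕ} [Nonempty (Fin k)] {θ : ℝ} (hθ : 0 < θ) {z : Fin k → ℝ}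
    (hz : ∀ i, 0 < z i) (hz1 : ∀ i, z i ≤ 1) :
    |deriv (fun θ => log (Vlog θ z)) θ|
      ≤ log k + 2 * (∑ j, |log (z j)|) / θ := by
  have hlogS := log_logisticSum_le hθ hz
  set L := ∑ j, |log (z j)|
  have hlogS0 := Real.log_nonneg (one_le_logisticSum hθ hz hz1)
  have hratio : θ * |logisticSumDeriv z θ / logisticSum z θ| ≤ L / θ := by
    calc θ * |logisticSumDeriv z θ / logisticSum z θ| ≤ θ * (L / θ ^ 2) :=
          mul_le_mul_of_nonneg_left (abs_logisticSumDeriv_div_le hz) hθ.le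
      _ = L / θ := by field_simp
  rw [(hasDerivAt_log_Vlog hθ hz).deriv]
  calc _ ≤ |log (logisticSum z θ)| + θ * |logisticSumDeriv z θ / logisticSum z θ| := by
        rw [← abs_of_pos hθ, ← abs_mul, abs_of_pos hθ]
        exact abs_add_le _ _
    _ ≤ log k + 2 * L / θ := by
        rw [abs_of_nonneg hlogS0, mul_div_assoc, two_mul]
        linarith

lemma abs_deriv_log_neg_mixedPartial_Vlog_le {k : ℕ} [Nonempty (Fin k)] {θ : ℝ}
    (hθ : θ ∈ Ioo (0 : ℝ) 1) {τ : Finset (Fin k)} (hτ : τ.Nonempty) {z : Fin k → ℝ}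
    (hz : ∀ i, 0 < z i) (hz1 : ∀ i, z i ≤ 1) :
    |deriv (fun θ => log (-mixedPartial τ (Vlog θ) z)) θ|
      ≤ k * (1 / (1 - θ) + 1 / θ) + (log k + (∑ j, |log (z j)|) / θ)
        + (k + 1) * ((∑ j, |log (z j)|) / θ ^ 2) := by
  set L := ∑ j, |log (z j)|
  obtain ⟨hθ0, hθ1⟩ := hθ
  have hcard : (τ.card : ℝ) ≤ k := by
    exact_mod_cast (Finset.card_le_univ τ).trans_eq (Fintype.card_fin k)
  have hcard1 : (1 : ℝ) ≤ τ.card := by exact_mod_cast Finset.card_pos.mpr hτ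
  have hcoeff : |∑ i ∈ Finset.range (τ.card - 1), (1 / (i + 1 - θ) + 1 / θ)|
      ≤ k * (1 / (1 - θ) + 1 / θ) := by
    have hterm : ∀ i : ℕ, 0 < 1 / ((i : ℝ) + 1 - θ) + 1 / θ ∧
        1 / ((i : ℝ) + 1 - θ) + 1 / θ ≤ 1 / (1 - θ) + 1 / θ := fun i => by
      have hi : 0 < (i : ℝ) + 1 - θ := by linarith [i.cast_nonneg (α := ℝ)]
      exact ⟨by positivity, by gcongr; linarith⟩
    rw [abs_of_nonneg (Finset.sum_nonneg fun i _ => (hterm i).1.le)]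
    refine (Finset.sum_le_card_nsmul _ _ _ fun i _ => (hterm i).2).trans ?_
    rw [nsmul_eq_mul, Finset.card_range]
    gcongr
    exact (Nat.sub_le _ _).trans ((Finset.card_le_univ τ).trans_eq (Fintype.card_fin k))
  have hlogS : |log (logisticSum z θ)| ≤ log k + L / θ := by
    rw [abs_of_nonneg (Real.log_nonneg (one_le_logisticSum hθ0 hz hz1))]
    exact log_logisticSum_le hθ0 hz
  have hratio : |(θ - τ.card) * (logisticSumDeriv z θ / logisticSum z θ)| ≤ k * (L / θ ^ 2) := by
    rw [abs_mul, abs_of_nonpos (by linarith)]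
    exact mul_le_mul (by linarith) (abs_logisticSumDeriv_div_le hz) (abs_nonneg _)
      (by linarith)
  have hlogz : |1 / θ ^ 2 * ∑ i ∈ τ, log (z i)| ≤ L / θ ^ 2 := by
    rw [abs_mul, abs_of_pos (by positivity), one_div_mul_eq_div]
    gcongr
    exact (Finset.abs_sum_le_sum_abs _ _).trans
      (Finset.sum_le_sum_of_subset_of_nonneg τ.subset_univ fun _ _ _ => abs_nonneg _)
  rw [(hasDerivAt_log_neg_mixedPartial_Vlog ⟨hθ0, hθ1⟩ hτ hz).deriv]
  calc _ ≤ |∑ i ∈ Finset.range (τ.card - 1), (1 / (i + 1 - θ) + 1 / θ)|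
        + (|log (logisticSum z θ)|
          + |(θ - τ.card) * (logisticSumDeriv z θ / logisticSum z θ)|)
        + |1 / θ ^ 2 * ∑ i ∈ τ, log (z i)| := by
        refine (abs_add_le _ _).trans (add_le_add_left ((abs_add_le _ _).trans ?_) _)
        rw [abs_neg]
        exact add_le_add_right (abs_add_le _ _) _
    _ ≤ _ := by linarith

lemma natCast_le_sum_rpow_of_nonpos {k : ℕ} {z : Fin k → ℝ} (hz : ∀ i, 0 < z i)
    (hz1 : ∀ i, z i ≤ 1) {y : ℝ} (hy : y ≤ 0) : (k : ℝ) ≤ ∑ i, z i ^ y := by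
  simpa using Finset.sum_le_sum fun i (_ : i ∈ Finset.univ) =>
    Real.one_le_rpow_of_pos_of_le_one_of_nonpos (hz i) (hz1 i) hy

lemma sum_abs_log_le_four_mul_sum_rpow {k : ℕ} {z : Fin k → ℝ} (hz : ∀ i, 0 < z i)
    (hz1 : ∀ i, z i ≤ 1) : ∑ i, |log (z i)| ≤ 4 * ∑ i, z i ^ (-(1 / 4 : ℝ)) := by
  rw [Finset.mul_sum]
  exact Finset.sum_le_sum fun i _ => abs_log_le_four_mul_rpow (hz i) (hz1 i)

lemma exists_logistic_bounds_of_mem_Icc {a b : ℝ} (ha : 0 < a) (hb : b < 1) (k : ℕ) :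
    ∃ A > 0, ∀ θ ∈ Icc a b, ∀ z : Fin k → ℝ, (∀ i, 0 < z i) → (∀ i, z i ≤ 1) →
      Nonempty (Fin k) →
      |deriv (fun θ => log (Vlog θ z)) θ| ≤ A * ∑ i, z i ^ (-(1 / 4 : ℝ)) ∧
      ∀ τ : Finset (Fin k), τ.Nonempty →
        |deriv (fun θ => log (-mixedPartial τ (Vlog θ) z)) θ|
          ≤ A * ∑ i, z i ^ (-(1 / 4 : ℝ)) := by
  have hb1 : 0 < 1 - b := by linarith
  refine ⟨1 + 1 / (1 - b) + 8 / a + 4 * (k + 1) / a ^ 2, by positivity, ?_⟩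
  rintro θ ⟨haθ, hθb⟩ z hz hz1 hne
  have hθ : θ ∈ Ioo (0 : ℝ) 1 := ⟨ha.trans_le haθ, hθb.trans_lt hb⟩
  have hV := abs_deriv_log_Vlog_le hθ.1 hz hz1
  have hM := fun (τ : Finset (Fin k)) (hτ : τ.Nonempty) =>
    abs_deriv_log_neg_mixedPartial_Vlog_le hθ hτ hz hz1
  have hL := sum_abs_log_le_four_mul_sum_rpow hz hz1
  have hL0 : 0 ≤ ∑ j, |log (z j)| := Finset.sum_nonneg fun j _ => abs_nonneg _
  have hkT : (k : ℝ) ≤ ∑ i, z i ^ (-(1 / 4 : ℝ)) :=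
    natCast_le_sum_rpow_of_nonpos hz hz1 (by norm_num)
  have hk1 : (1 : ℝ) ≤ k := by exact_mod_cast Fin.pos_iff_nonempty.mpr hne
  have hlogk : log k ≤ k := Real.log_le_self (by positivity)
  generalize ∑ j, |log (z j)| = L at hV hM hL hL0
  generalize ∑ i, z i ^ (-(1 / 4 : ℝ)) = T at hL hkT ⊢
  have hT : 0 ≤ T := by linarith
  have hinv : 1 / θ ≤ 1 / a := by gcongr
  have hinv2 : 1 / θ ^ 2 ≤ 1 / a ^ 2 := by gcongr
  have hinv1 : 1 / (1 - θ) ≤ 1 / (1 - b) := by gcongr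
  have h1 : L * (1 / θ) ≤ 4 * T * (1 / a) :=
    mul_le_mul hL hinv (by simp [hθ.1.le]) (by positivity)
  have h2 : (k + 1) * (L * (1 / θ ^ 2)) ≤ (k + 1) * (4 * T * (1 / a ^ 2)) := by gcongr
  have h3 : k * (1 / (1 - θ) + 1 / θ) ≤ T * (1 / (1 - b) + 1 / a) :=
    mul_le_mul hkT (add_le_add hinv1 hinv)
      (add_nonneg (by simp [hθ.2.le]) (by simp [hθ.1.le])) hT
  have hA : (1 + 1 / (1 - b) + 8 / a + 4 * (k + 1) / a ^ 2) * T
      = T + T * (1 / (1 - b)) + 8 * (T * (1 / a)) + (k + 1) * (4 * T * (1 / a ^ 2)) := by ring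
  have hTb : 0 ≤ T * (1 / (1 - b)) := by positivity
  have hTa : 0 ≤ T * (1 / a) := by positivity
  have hTa2 : 0 ≤ (k + 1) * (4 * T * (1 / a ^ 2)) := by positivity
  rw [hA]
  refine ⟨hV.trans ?_, fun τ hτ => (hM τ hτ).trans ?_⟩
  · rw [mul_div_assoc, div_eq_mul_one_div L]
    linarith
  · rw [div_eq_mul_one_div L, div_eq_mul_one_div L]
    linarith

theorem stmt11_general {k : ℕ} (θ0 : ℝ) (hθ0 : θ0 ∈ Set.Ioo (0 : ℝ) 1) :
    ∃ Θ0 : Set ℝ, IsOpen Θ0 ∧ θ0 ∈ Θ0 ∧ Θ0 ⊆ Set.Ioo (0 : ℝ) 1 ∧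
      ∃ A : ℝ, 0 < A ∧ ∃ α : ℝ, 0 < α ∧ α < 1/2 ∧
        ∀ θ ∈ Θ0, ∀ z : Fin k → ℝ, (∀ i, 0 < z i) → ‖z‖ = 1 →
          |deriv (fun θ' => Real.log (Vlog θ' z)) θ| ≤ A * ∑ i, (z i) ^ (-α) ∧
          ∀ τ : Finset (Fin k), τ.Nonempty →
            |deriv (fun θ' => Real.log (- mixedPartial τ (Vlog θ') z)) θ|
              ≤ A * ∑ i, (z i) ^ (-α) := by
  obtain ⟨hθ0, hθ1⟩ := hθ0
  obtain ⟨A, hA, hbound⟩ :=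
    exists_logistic_bounds_of_mem_Icc (a := θ0 / 2) (b := (1 + θ0) / 2) (by positivity)
      (by linarith) k
  refine ⟨Ioo (θ0 / 2) ((1 + θ0) / 2), isOpen_Ioo, ⟨by linarith, by linarith⟩,
    fun θ hθ => ⟨by linarith [hθ.1], by linarith [hθ.2]⟩, A, hA, 1 / 4, by norm_num, by norm_num,
    fun θ hθ z hz hzn => ?_⟩
  have hne : Nonempty (Fin k) := by
    by_contra h
    rw [not_nonempty_iff] at h
    simp [Subsingleton.elim z 0] at hzn
  have hz1 : ∀ i, z i ≤ 1 := fun i => by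
    simpa [hzn, abs_of_pos (hz i)] using norm_le_pi_norm z i
  exact hbound θ (Ioo_subset_Icc_self hθ) z hz hz1 hne

/-- (Lemma 2 of the paper: the logistic model satisfies condition A3)).
For every `θ0 ∈ (0,1)` there are a neighborhood `Θ0 ⊆ (0,1)` of `θ0`, `A > 0` and
`α ∈ (0,1/2)` such that for all `θ ∈ Θ0`, all `z ∈ (0,∞)^k` with `‖z‖_∞ = 1` and all
nonempty `τ`, `|∂_θ log V_θ(z)| ≤ A ∑ᵢ zᵢ^{−α}` and
`|∂_θ log(−∂_τ V_θ(z))| ≤ A ∑ᵢ zᵢ^{−α}`.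
(The norm on `Fin k → ℝ` is the sup-norm.) -/
theorem stmt11 {k : ℕ} (hk : 1 ≤ k) (θ0 : ℝ) (hθ0 : θ0 ∈ Set.Ioo (0 : ℝ) 1) :
    ∃ Θ0 : Set ℝ, IsOpen Θ0 ∧ θ0 ∈ Θ0 ∧ Θ0 ⊆ Set.Ioo (0 : ℝ) 1 ∧
      ∃ A : ℝ, 0 < A ∧ ∃ α : ℝ, 0 < α ∧ α < 1/2 ∧
        ∀ θ ∈ Θ0, ∀ z : Fin k → ℝ, (∀ i, 0 < z i) → ‖z‖ = 1 →
          |deriv (fun θ' => Real.log (Vlog θ' z)) θ| ≤ A * ∑ i, (z i) ^ (-α) ∧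
          ∀ τ : Finset (Fin k), τ.Nonempty →
            |deriv (fun θ' => Real.log (- mixedPartial τ (Vlog θ') z)) θ|
              ≤ A * ∑ i, (z i) ^ (-α) :=
  stmt11_general θ0 hθ0

end
end

section
/- For α = (α_1,…,α_k) ∈ (0,∞)^k let h_α(w) = (1/k) · Γ(1 + ∑_{i=1}^k α_i) / ( ∑_{i=1}^k α_i w_i )^{k+1} · ∏_{i=1}^k [ α_i/Γ(α_i) ] · ( α_i w_i / ∑_{j=1}^k α_j w_j )^{α_i − 1} for w ∈ int(S^{k−1}). Then for every δ > 0 and every m ∈ {1,…,k}, the partial derivative ∂_{α_m} h_α(w) exists and there is a continuous function C₁ : (0,∞)^k → (0,∞) such that for all α ∈ (0,∞)^k and all w ∈ int(S^{k−1}): |∂_{α_m} h_α(w)| ≤ C₁(α) ∏_{i=1}^k w_i^{α_i − 1 − δ}. -/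
/-!
Collecting the powers of `S = ∑ αᵢwᵢ` (the exponents `-(k+1)` and `-(αᵢ-1)` add up to
`-(1+∑αᵢ)`), `h_α(w) = exp Λ(α,w)` with
`Λ = log c(α) + ∑ (αᵢ-1) log wᵢ - (1+∑αᵢ) log S`, so `∂_{α_m} h_α = h_α · ∂_{α_m}Λ` and
`∂_{α_m}Λ = ψ(1+∑αᵢ) - ψ(α_m) + 1 + log α_m + log w_m - log S - (1+∑αᵢ) w_m / S`.
Since `S` is a weighted mean of the `αᵢ`, `|log S| ≤ ∑ |log αᵢ|`, which bounds every term
involving `S` by a continuous function of `α`. The one unbounded term, `log w_m`, is at most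
`w_m^{-δ}/δ`, and the factor `w_m^{-δ}` is absorbed by `∏ wᵢ^{-δ}` because all `wᵢ ≤ 1`.
-/

open MeasureTheory Real Set Filter

noncomputable section

/-- The positive orthant `(0,∞)^k`. -/
def posOrth (k : ℕ) : Set (Fin k → ℝ) := {z | ∀ i, 0 < z i}

/-- The Dirichlet angular density
`h_α(w) = (1/k) Γ(1+∑αᵢ)/(∑αᵢwᵢ)^{k+1} ∏ᵢ (αᵢ/Γ(αᵢ)) (αᵢwᵢ/∑αⱼwⱼ)^{αᵢ−1}`. -/
noncomputable def hDirichlet {k : ℕ} (a : Fin k → ℝ) (w : Fin k → ℝ) : ℝ :=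
  (1 / (k : ℝ)) * Real.Gamma (1 + ∑ i, a i) / (∑ i, a i * w i) ^ (k + 1)
    * ∏ i, (a i / Real.Gamma (a i)) * (a i * w i / ∑ j, a j * w j) ^ (a i - 1)

open scoped Topology

theorem Real.contDiffAt_Gamma {x : ℝ} (hx : 0 < x) (n : WithTop ℕ∞) :
    ContDiffAt ℝ n Gamma x := by
  have hU : IsOpen {s : ℂ | 0 < s.re} := isOpen_lt continuous_const Complex.continuous_re
  have hdiff : DifferentiableOn ℂ Complex.Gamma {s : ℂ | 0 < s.re} := fun s hs =>
    (Complex.differentiableAt_Gamma s fun n h => by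
      simp [h] at hs; linarith [hs]).differentiableWithinAt
  have := ((hdiff.contDiffOn hU (n := n)).contDiffAt
    (hU.mem_nhds (by simpa using hx))).real_of_complex
  simpa [Complex.Gamma_ofReal] using this

theorem Real.continuousOn_logDeriv_Gamma : ContinuousOn (logDeriv Gamma) (Ioi 0) := by
  have hΓ : ContDiffOn ℝ 1 Gamma (Ioi 0) := fun x hx => (contDiffAt_Gamma hx 1).contDiffWithinAt
  exact (hΓ.continuousOn_deriv_of_isOpen isOpen_Ioi le_rfl).div hΓ.continuousOn
    fun x hx => (Gamma_pos_of_pos hx).ne'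

theorem HasDerivAt.log_Gamma {f : ℝ → ℝ} {f' x : ℝ} (hf : HasDerivAt f f' x) (hx : 0 < f x) :
    HasDerivAt (fun t => Real.log (Gamma (f t))) (logDeriv Gamma (f x) * f') x := by
  have := ((contDiffAt_Gamma hx 1).differentiableAt one_ne_zero).hasDerivAt.comp x hf
  simpa [logDeriv_apply, div_mul_eq_mul_div] using this.log (Gamma_pos_of_pos hx).ne'

theorem hasDerivAt_sum_update {ι : Type*} [Fintype ι] [DecidableEq ι] (f : ι → ℝ → ℝ)
    (a : ι → ℝ) (m : ι) {f' : ℝ} (hf : HasDerivAt (f m) f' (a m)) :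
    HasDerivAt (fun t => ∑ i, f i (Function.update a m t i)) f' (a m) := by
  have : (fun t => ∑ i, f i (Function.update a m t i))
      = fun t => f m t + ∑ i ∈ Finset.univ.erase m, f i (a i) := by
    funext t
    rw [← Finset.add_sum_erase _ _ (Finset.mem_univ m), Function.update_self]
    congr 1
    exact Finset.sum_congr rfl fun i hi => by
      rw [Function.update_of_ne (Finset.ne_of_mem_erase hi)]
  rw [this]
  exact hf.add_const _

theorem abs_log_sum_mul_le {ι : Type*} [Fintype ι] {a w : ι → ℝ} (ha : ∀ i, 0 < a i)
    (hw : ∀ i, 0 ≤ w i) (hw1 : ∑ i, w i = 1) :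
    |log (∑ i, a i * w i)| ≤ ∑ i, |log (a i)| := by
  have hne : (Finset.univ : Finset ι).Nonempty :=
    Finset.nonempty_of_sum_ne_zero (hw1.symm ▸ one_ne_zero)
  obtain ⟨i₀, -, hi₀⟩ := Finset.exists_min_image Finset.univ a hne
  obtain ⟨i₁, -, hi₁⟩ := Finset.exists_max_image Finset.univ a hne
  have hlo : a i₀ ≤ ∑ i, a i * w i := calc
    a i₀ = ∑ i, a i₀ * w i := by rw [← Finset.mul_sum, hw1, mul_one]
    _ ≤ ∑ i, a i * w i := Finset.sum_le_sum fun i _ =>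
      mul_le_mul_of_nonneg_right (hi₀ i (Finset.mem_univ i)) (hw i)
  have hhi : ∑ i, a i * w i ≤ a i₁ := calc
    ∑ i, a i * w i ≤ ∑ i, a i₁ * w i := Finset.sum_le_sum fun i _ =>
      mul_le_mul_of_nonneg_right (hi₁ i (Finset.mem_univ i)) (hw i)
    _ = a i₁ := by rw [← Finset.mul_sum, hw1, mul_one]
  have hle_sum : ∀ j, |log (a j)| ≤ ∑ i, |log (a i)| := fun j =>
    Finset.single_le_sum (f := fun i => |log (a i)|) (fun _ _ => abs_nonneg _) (Finset.mem_univ j)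
  calc |log (∑ i, a i * w i)|
      ≤ max |log (a i₀)| |log (a i₁)| :=
        abs_le_max_abs_abs (log_le_log (ha i₀) hlo) (log_le_log ((ha i₀).trans_le hlo) hhi)
    _ ≤ ∑ i, |log (a i)| := max_le (hle_sum i₀) (hle_sum i₁)

theorem abs_log_le_rpow_neg_div {x ε : ℝ} (hx : 0 < x) (hx1 : x ≤ 1) (hε : 0 < ε) :
    |log x| ≤ x ^ (-ε) / ε := by
  rw [abs_of_nonpos (log_nonpos hx.le hx1), ← log_inv, rpow_neg hx.le, ← inv_rpow hx.le]
  exact log_le_rpow_div (inv_nonneg.2 hx.le) hε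

theorem add_abs_log_le_mul_rpow_neg {c x ε : ℝ} (hc : 0 ≤ c) (hx : 0 < x) (hx1 : x ≤ 1)
    (hε : 0 < ε) : c + |log x| ≤ (c + 1 / ε) * x ^ (-ε) := by
  have h1 : 1 ≤ x ^ (-ε) := one_le_rpow_of_pos_of_le_one_of_nonpos hx hx1 (by linarith)
  have h2 := abs_log_le_rpow_neg_div hx hx1 hε
  rw [add_mul, one_div_mul_eq_div]
  nlinarith

theorem prod_rpow_mul_rpow_neg_le {ι : Type*} [Fintype ι] {w e : ι → ℝ} (m : ι)
    (hw : ∀ i, 0 < w i) (hw1 : ∀ i, w i ≤ 1) {ε : ℝ} (hε : 0 ≤ ε) :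
    (∏ i, w i ^ e i) * w m ^ (-ε) ≤ ∏ i, w i ^ (e i - ε) := by
  have hsplit : ∏ i, w i ^ (e i - ε) = (∏ i, w i ^ e i) * ∏ i, w i ^ (-ε) := by
    rw [← Finset.prod_mul_distrib]
    exact Finset.prod_congr rfl fun i _ => by rw [sub_eq_add_neg, rpow_add (hw i)]
  have hone : ∀ i, 1 ≤ w i ^ (-ε) := fun i =>
    one_le_rpow_of_pos_of_le_one_of_nonpos (hw i) (hw1 i) (neg_nonpos.2 hε)
  rw [hsplit]
  refine mul_le_mul_of_nonneg_left ?_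
    (Finset.prod_nonneg fun i _ => (rpow_pos_of_pos (hw i) _).le)
  calc w m ^ (-ε) = ∏ i ∈ {m}, w i ^ (-ε) := (Finset.prod_singleton (fun i => w i ^ (-ε)) m).symm
    _ ≤ ∏ i, w i ^ (-ε) := Finset.prod_le_prod_of_subset_of_one_le (Finset.subset_univ _)
      (fun i _ => zero_le_one.trans (hone i)) fun i _ _ => hone i

section Dirichlet

variable {k : ℕ}

theorem le_one_of_mem_intSimplex {w : Fin k → ℝ} (hw : w ∈ intSimplex k) (i : Fin k) :
    w i ≤ 1 :=
  hw.2 ▸ Finset.single_le_sum (fun j _ => (hw.1 j).le) (Finset.mem_univ i)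

def logDirichletConst (a : Fin k → ℝ) : ℝ :=
  log (1 / (k : ℝ)) + log (Gamma (1 + ∑ i, a i)) + ∑ i, (a i * log (a i) - log (Gamma (a i)))

def logDirichlet (a w : Fin k → ℝ) : ℝ :=
  logDirichletConst a + ∑ i, (a i - 1) * log (w i) - (1 + ∑ i, a i) * log (∑ i, a i * w i)

theorem hDirichlet_eq_exp_logDirichlet (hk : 0 < k) {a w : Fin k → ℝ} (ha : ∀ i, 0 < a i)
    (hw : ∀ i, 0 < w i) : hDirichlet a w = exp (logDirichlet a w) := by
  have hS : 0 < ∑ i, a i * w i :=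
    Finset.sum_pos (fun i _ => mul_pos (ha i) (hw i)) (Finset.univ_nonempty_iff.2 ⟨⟨0, hk⟩⟩)
  have hΓ : 0 < Gamma (1 + ∑ i, a i) :=
    Gamma_pos_of_pos (add_pos_of_pos_of_nonneg one_pos (Finset.sum_nonneg fun i _ => (ha i).le))
  have hfactor : ∀ i, 0 < a i / Gamma (a i) * (a i * w i / ∑ j, a j * w j) ^ (a i - 1) :=
    fun i => by have := Gamma_pos_of_pos (ha i); have := ha i; have := hw i; positivity
  have hlog_factor : ∀ i, log (a i / Gamma (a i) * (a i * w i / ∑ j, a j * w j) ^ (a i - 1))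
      = a i * log (a i) - log (Gamma (a i)) + (a i - 1) * log (w i)
        - (a i - 1) * log (∑ j, a j * w j) := fun i => by
    have hq : 0 < a i * w i / ∑ j, a j * w j := div_pos (mul_pos (ha i) (hw i)) hS
    rw [log_mul (div_pos (ha i) (Gamma_pos_of_pos (ha i))).ne' (rpow_pos_of_pos hq _).ne',
      log_div (ha i).ne' (Gamma_pos_of_pos (ha i)).ne', log_rpow hq,
      log_div (mul_pos (ha i) (hw i)).ne' hS.ne', log_mul (ha i).ne' (hw i).ne']
    ring
  have hpos : 0 < hDirichlet a w := by
    have := Finset.prod_pos fun i (_ : i ∈ Finset.univ) => hfactor i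
    unfold hDirichlet
    positivity
  rw [← exp_log hpos, hDirichlet,
    log_mul (by positivity) (Finset.prod_pos fun i _ => hfactor i).ne',
    log_div (by positivity) (by positivity), log_mul (by positivity) hΓ.ne', log_pow,
    log_prod fun i _ => (hfactor i).ne']
  simp only [hlog_factor, Finset.sum_sub_distrib, Finset.sum_add_distrib, ← Finset.sum_mul,
    Finset.sum_const, Finset.card_univ, Fintype.card_fin, nsmul_eq_mul, logDirichlet,
    logDirichletConst]
  congr 1
  push_cast
  ring

def logDirichletDeriv (m : Fin k) (a w : Fin k → ℝ) : ℝ :=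
  logDeriv Gamma (1 + ∑ i, a i) + (log (a m) + 1 - logDeriv Gamma (a m)) + log (w m)
    - (log (∑ i, a i * w i) + (1 + ∑ i, a i) * (w m / ∑ i, a i * w i))

theorem hasDerivAt_logDirichlet_update (m : Fin k) {a w : Fin k → ℝ} (ha : ∀ i, 0 < a i)
    (hw : ∀ i, 0 < w i) :
    HasDerivAt (fun t => logDirichlet (Function.update a m t) w)
      (logDirichletDeriv m a w) (a m) := by
  have hA : HasDerivAt (fun t => 1 + ∑ i, Function.update a m t i) 1 (a m) :=
    (hasDerivAt_sum_update (fun _ x => x) a m (hasDerivAt_id _)).const_add 1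
  have hS : HasDerivAt (fun t => ∑ i, Function.update a m t i * w i) (w m) (a m) := by
    simpa using hasDerivAt_sum_update (fun i x => x * w i) a m ((hasDerivAt_id _).mul_const (w m))
  have hconst : HasDerivAt
      (fun t => ∑ i, (Function.update a m t i * log (Function.update a m t i)
        - log (Gamma (Function.update a m t i))))
      (log (a m) + 1 - logDeriv Gamma (a m)) (a m) := by
    refine hasDerivAt_sum_update (fun _ x => x * log x - log (Gamma x)) a m ?_
    refine (((hasDerivAt_id (a m)).mul (hasDerivAt_log (ha m).ne')).sub
      ((hasDerivAt_id (a m)).log_Gamma (ha m))).congr_deriv ?_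
    simp [(ha m).ne']
  have hP : HasDerivAt (fun t => ∑ i, (Function.update a m t i - 1) * log (w i))
      (log (w m)) (a m) := by
    simpa using hasDerivAt_sum_update (fun i x => (x - 1) * log (w i)) a m
      (((hasDerivAt_id _).sub_const 1).mul_const (log (w m)))
  have hApos : 0 < 1 + ∑ i, a i :=
    add_pos_of_pos_of_nonneg one_pos (Finset.sum_nonneg fun i _ => (ha i).le)
  have hSpos : 0 < ∑ i, a i * w i :=
    Finset.sum_pos (fun i _ => mul_pos (ha i) (hw i)) ⟨m, Finset.mem_univ m⟩
  refine (((((hA.log_Gamma (by simpa using hApos)).const_add (log (1 / (k : ℝ)))).add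
    hconst).add hP).sub (hA.mul (hS.log (by simpa using hSpos.ne')))).congr_deriv ?_
  simp only [Function.update_eq_self, logDirichletDeriv]
  ring

theorem hasDerivAt_hDirichlet_update (m : Fin k) {a w : Fin k → ℝ} (ha : ∀ i, 0 < a i)
    (hw : ∀ i, 0 < w i) :
    HasDerivAt (fun t => hDirichlet (Function.update a m t) w)
      (hDirichlet a w * logDirichletDeriv m a w) (a m) := by
  have hupdate : ∀ᶠ t in 𝓝 (a m), hDirichlet (Function.update a m t) w
      = exp (logDirichlet (Function.update a m t) w) := by
    filter_upwards [Ioi_mem_nhds (ha m)] with t ht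
    refine hDirichlet_eq_exp_logDirichlet m.pos (fun i => ?_) hw
    rcases eq_or_ne i m with rfl | hi
    · simpa using ht
    · simpa [hi] using ha i
  have := (hasDerivAt_logDirichlet_update m ha hw).exp.congr_of_eventuallyEq hupdate
  rwa [Function.update_eq_self, ← hDirichlet_eq_exp_logDirichlet m.pos ha hw] at this

def logDirichletDerivBound (m : Fin k) (a : Fin k → ℝ) : ℝ :=
  |logDeriv Gamma (1 + ∑ i, a i)| + |log (a m) + 1 - logDeriv Gamma (a m)| + ∑ i, |log (a i)|
    + (1 + ∑ i, a i) * exp (∑ i, |log (a i)|)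

theorem logDirichletDerivBound_nonneg (m : Fin k) {a : Fin k → ℝ} (ha : ∀ i, 0 < a i) :
    0 ≤ logDirichletDerivBound m a := by
  have := Finset.sum_nonneg fun i (_ : i ∈ Finset.univ) => (ha i).le
  unfold logDirichletDerivBound
  positivity

theorem abs_logDirichletDeriv_le (m : Fin k) {a w : Fin k → ℝ} (ha : ∀ i, 0 < a i)
    (hw : w ∈ intSimplex k) :
    |logDirichletDeriv m a w| ≤ logDirichletDerivBound m a + |log (w m)| := by
  have hB := abs_log_sum_mul_le ha (fun i => (hw.1 i).le) hw.2
  have hS : 0 < ∑ i, a i * w i :=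
    Finset.sum_pos (fun i _ => mul_pos (ha i) (hw.1 i)) ⟨m, Finset.mem_univ m⟩
  have hA : 0 ≤ 1 + ∑ i, a i :=
    add_nonneg zero_le_one (Finset.sum_nonneg fun i _ => (ha i).le)
  have hq : w m / ∑ i, a i * w i ≤ exp (∑ i, |log (a i)|) := calc
    w m / ∑ i, a i * w i ≤ 1 / ∑ i, a i * w i :=
      div_le_div_of_nonneg_right (le_one_of_mem_intSimplex hw m) hS.le
    _ = exp (-log (∑ i, a i * w i)) := by rw [exp_neg, exp_log hS, one_div]
    _ ≤ exp (∑ i, |log (a i)|) := exp_le_exp.2 ((neg_le_abs _).trans hB)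
  have hcq := mul_le_mul_of_nonneg_left hq hA
  have hcq0 := mul_nonneg hA (div_nonneg (hw.1 m).le hS.le)
  unfold logDirichletDeriv logDirichletDerivBound
  rw [abs_le]
  constructor <;>
  linarith [le_abs_self (logDeriv Gamma (1 + ∑ i, a i)),
    neg_abs_le (logDeriv Gamma (1 + ∑ i, a i)),
    le_abs_self (log (a m) + 1 - logDeriv Gamma (a m)),
    neg_abs_le (log (a m) + 1 - logDeriv Gamma (a m)),
    le_abs_self (log (w m)), neg_abs_le (log (w m)), abs_le.1 hB]

theorem exp_logDirichlet_le {a w : Fin k → ℝ} (ha : ∀ i, 0 < a i) (hw : w ∈ intSimplex k) :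
    exp (logDirichlet a w)
      ≤ exp (logDirichletConst a + (1 + ∑ i, a i) * ∑ i, |log (a i)|) * ∏ i, w i ^ (a i - 1) := by
  have hB := abs_log_sum_mul_le ha (fun i => (hw.1 i).le) hw.2
  have hA : 0 ≤ 1 + ∑ i, a i :=
    add_nonneg zero_le_one (Finset.sum_nonneg fun i _ => (ha i).le)
  have hprod : ∏ i, w i ^ (a i - 1) = exp (∑ i, (a i - 1) * log (w i)) := by
    rw [exp_sum]
    exact Finset.prod_congr rfl fun i _ => by rw [rpow_def_of_pos (hw.1 i), mul_comm]
  rw [hprod, ← exp_add, logDirichlet]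
  refine exp_le_exp.2 ?_
  nlinarith [mul_le_mul_of_nonneg_left ((neg_le_abs _).trans hB) hA]

def dirichletDerivConst (m : Fin k) (δ : ℝ) (a : Fin k → ℝ) : ℝ :=
  exp (logDirichletConst a + (1 + ∑ i, a i) * ∑ i, |log (a i)|)
    * (logDirichletDerivBound m a + 1 / δ)

theorem dirichletDerivConst_pos (m : Fin k) {δ : ℝ} (hδ : 0 < δ) {a : Fin k → ℝ}
    (ha : ∀ i, 0 < a i) : 0 < dirichletDerivConst m δ a :=
  mul_pos (exp_pos _) (by have := logDirichletDerivBound_nonneg m ha; positivity)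

theorem continuousOn_dirichletDerivConst (m : Fin k) (δ : ℝ) :
    ContinuousOn (dirichletDerivConst m δ) (posOrth k) := by
  have hA : ∀ b ∈ posOrth k, 0 < 1 + ∑ i, b i := fun b hb =>
    add_pos_of_pos_of_nonneg one_pos (Finset.sum_nonneg fun i _ => (hb i).le)
  have hΓA : ContinuousOn (fun b : Fin k → ℝ => Gamma (1 + ∑ i, b i)) (posOrth k) :=
    differentiableOn_Gamma_Ioi.continuousOn.comp (by fun_prop) hA
  have hΓ : ∀ i, ContinuousOn (fun b : Fin k → ℝ => Gamma (b i)) (posOrth k) := fun i =>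
    differentiableOn_Gamma_Ioi.continuousOn.comp (by fun_prop) fun b hb => hb i
  have hψA : ContinuousOn (fun b : Fin k → ℝ => logDeriv Gamma (1 + ∑ i, b i)) (posOrth k) :=
    continuousOn_logDeriv_Gamma.comp (by fun_prop) hA
  have hψ : ContinuousOn (fun b : Fin k → ℝ => logDeriv Gamma (b m)) (posOrth k) :=
    continuousOn_logDeriv_Gamma.comp (by fun_prop) fun b hb => hb m
  unfold dirichletDerivConst logDirichletConst logDirichletDerivBound
  fun_prop (disch := first
    | exact fun b hb => (hb _).ne'
    | exact fun b hb => (Gamma_pos_of_pos (hb _)).ne'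
    | exact fun b hb => (Gamma_pos_of_pos (hA b hb)).ne')

theorem abs_hDirichlet_mul_logDirichletDeriv_le (m : Fin k) {δ : ℝ} (hδ : 0 < δ)
    {a w : Fin k → ℝ} (ha : ∀ i, 0 < a i) (hw : w ∈ intSimplex k) :
    |hDirichlet a w * logDirichletDeriv m a w|
      ≤ dirichletDerivConst m δ a * ∏ i, w i ^ (a i - 1 - δ) := by
  have hD := logDirichletDerivBound_nonneg m ha
  have hw1 := le_one_of_mem_intSimplex hw
  rw [hDirichlet_eq_exp_logDirichlet m.pos ha hw.1, abs_mul, abs_of_pos (exp_pos _)]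
  calc exp (logDirichlet a w) * |logDirichletDeriv m a w|
      ≤ (exp (logDirichletConst a + (1 + ∑ i, a i) * ∑ i, |log (a i)|) * ∏ i, w i ^ (a i - 1))
        * ((logDirichletDerivBound m a + 1 / δ) * w m ^ (-δ)) :=
      mul_le_mul (exp_logDirichlet_le ha hw) ((abs_logDirichletDeriv_le m ha hw).trans
        (add_abs_log_le_mul_rpow_neg hD (hw.1 m) (hw1 m) hδ)) (abs_nonneg _)
        (mul_nonneg (exp_pos _).le (Finset.prod_nonneg fun i _ => (rpow_pos_of_pos (hw.1 i) _).le))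
    _ = dirichletDerivConst m δ a * ((∏ i, w i ^ (a i - 1)) * w m ^ (-δ)) := by
      rw [dirichletDerivConst]; ring
    _ ≤ dirichletDerivConst m δ a * ∏ i, w i ^ (a i - 1 - δ) :=
      mul_le_mul_of_nonneg_left (prod_rpow_mul_rpow_neg_le m hw.1 hw1 hδ.le)
        (dirichletDerivConst_pos m hδ ha).le

end Dirichlet

theorem stmt14_general {k : ℕ} (δ : ℝ) (hδ : 0 < δ) (m : Fin k) :
    (∀ a ∈ posOrth k, ∀ w ∈ intSimplex k,
      DifferentiableAt ℝ (fun t => hDirichlet (Function.update a m t) w) (a m)) ∧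
    ∃ C₁ : (Fin k → ℝ) → ℝ, ContinuousOn C₁ (posOrth k) ∧ (∀ a ∈ posOrth k, 0 < C₁ a) ∧
      ∀ a ∈ posOrth k, ∀ w ∈ intSimplex k,
        |deriv (fun t => hDirichlet (Function.update a m t) w) (a m)|
          ≤ C₁ a * ∏ i, (w i) ^ (a i - 1 - δ) := by
  refine ⟨fun a ha w hw => (hasDerivAt_hDirichlet_update m ha hw.1).differentiableAt,
    dirichletDerivConst m δ, continuousOn_dirichletDerivConst m δ,
    fun a ha => dirichletDerivConst_pos m hδ ha, fun a ha w hw => ?_⟩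
  rw [(hasDerivAt_hDirichlet_update m ha hw.1).deriv]
  exact abs_hDirichlet_mul_logDirichletDeriv_le m hδ ha hw

/-- derivative bound for the Dirichlet angular density, Lemma 3 of the
paper.  For every `δ > 0` and `m`, the partial derivative `∂_{α_m} h_α(w)` exists and there
is a continuous function `C₁ : (0,∞)^k → (0,∞)` with
`|∂_{α_m} h_α(w)| ≤ C₁(α) ∏ᵢ wᵢ^{αᵢ−1−δ}` for all `α ∈ (0,∞)^k`, `w ∈ int(S^{k−1})`. -/
theorem stmt14 {k : ℕ} (hk : 1 ≤ k) (δ : ℝ) (hδ : 0 < δ) (m : Fin k) :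
    (∀ a ∈ posOrth k, ∀ w ∈ intSimplex k,
      DifferentiableAt ℝ (fun t => hDirichlet (Function.update a m t) w) (a m)) ∧
    ∃ C₁ : (Fin k → ℝ) → ℝ, ContinuousOn C₁ (posOrth k) ∧ (∀ a ∈ posOrth k, 0 < C₁ a) ∧
      ∀ a ∈ posOrth k, ∀ w ∈ intSimplex k,
        |deriv (fun t => hDirichlet (Function.update a m t) w) (a m)|
          ≤ C₁ a * ∏ i, (w i) ^ (a i - 1 - δ) :=
  stmt14_general δ hδ m

end
end

section
/- Let m ≥ 1 and let R̂ be a positive definite m × m real matrix. Then there exists a constant C > 0 such that for all b = (b_1,…,b_m) ∈ ℝ^m, writing b_min = min_{1 ≤ i ≤ m} b_i: ( ∫_{∏_{i=1}^m (−∞, b_i)} ‖x‖₂² exp(−½ xᵀ R̂^{−1} x) dx ) / ( ∫_{∏_{i=1}^m (−∞, b_i)} exp(−½ xᵀ R̂^{−1} x) dx ) ≤ C (1 + b_min²)^{m+1}. -/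
/-!
Let `Q x = xᵀ A x` with `A = R̂⁻¹`; by compactness of the unit sphere, `Q x ≥ μ ‖x‖₂²` for some
`μ > 0`. Let `p` minimise `Q` over the closed box `x ≤ b`. The box is convex, so the first-order
condition at `p` gives `Q x ≥ Q p + Q (x - p) ≥ Q p + μ ‖x - p‖₂²` on the box; hence the numerator
is at most `e^{-Q p / 2} (8/μ + 2 ‖p‖₂²)` times a fixed Gaussian integral. The denominator is at
least `e^{-Q p / 2}` times the integral over the cube of side `(1 + ‖p‖∞)⁻¹` just below `p`, on
which `Q` exceeds `Q p` by at most `3 ∑ |Aᵢⱼ|`. Finally `p` does at least as well as the corner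
`min(b, 0)`, so `μ ‖p‖₂² ≤ Q p ≤ (∑ |Aᵢⱼ|) b_min²`, and the ratio is polynomial in `b_min`.
-/

open MeasureTheory Real Set Filter Matrix Topology

section

variable {ι : Type*} [Fintype ι]

theorem norm_sq_le_sum_sq (x : ι → ℝ) : ‖x‖ ^ 2 ≤ ∑ i, x i ^ 2 := by
  have hsum := Finset.sum_nonneg fun i (_ : i ∈ Finset.univ) ↦ sq_nonneg (x i)
  have : ‖x‖ ≤ √(∑ i, x i ^ 2) := (pi_norm_le_iff_of_nonneg (sqrt_nonneg _)).2 fun i ↦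
    Real.abs_le_sqrt (Finset.single_le_sum (fun j _ ↦ sq_nonneg (x j)) (Finset.mem_univ i))
  calc ‖x‖ ^ 2 ≤ √(∑ i, x i ^ 2) ^ 2 := by gcongr
    _ = ∑ i, x i ^ 2 := sq_sqrt hsum

theorem sum_sq_add_le (x y : ι → ℝ) :
    ∑ i, (x i + y i) ^ 2 ≤ 2 * ∑ i, x i ^ 2 + 2 * ∑ i, y i ^ 2 := by
  rw [Finset.mul_sum, Finset.mul_sum, ← Finset.sum_add_distrib]
  exact Finset.sum_le_sum fun i _ ↦ by linarith [add_sq_le (a := x i) (b := y i)]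

theorem mul_exp_neg_two_mul_le {c : ℝ} (hc : 0 < c) (u : ℝ) :
    u * exp (-(2 * c) * u) ≤ c⁻¹ * exp (-c * u) := by
  have hu : u ≤ c⁻¹ * exp (c * u) := by
    rw [le_inv_mul_iff₀ hc]
    linarith [add_one_le_exp (c * u)]
  calc u * exp (-(2 * c) * u) ≤ c⁻¹ * exp (c * u) * exp (-(2 * c) * u) := by gcongr
    _ = c⁻¹ * exp (-c * u) := by rw [mul_assoc, ← exp_add]; ring_nf

theorem eight_div_add_mul_one_add_pow_le {μ S t r β : ℝ} (n : ℕ) (hμ : 0 < μ) (hS : 0 ≤ S)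
    (hr : 0 ≤ r) (hrt : r ^ 2 ≤ t) (ht : μ * t ≤ S * β ^ 2) :
    (8 / μ + 2 * t) * (1 + r) ^ n ≤
      (8 / μ + 2) * 2 ^ n * (1 + S / μ) ^ (n + 1) * (1 + β ^ 2) ^ (n + 1) := by
  have ht0 : 0 ≤ t := (sq_nonneg r).trans hrt
  have h8 : 0 ≤ 8 / μ := by positivity
  have hcoef : 8 / μ + 2 * t ≤ (8 / μ + 2) * (1 + t) := by nlinarith
  have hr' : 1 + r ≤ 2 * (1 + t) := by nlinarith [sq_nonneg (r - 1)]
  have ht' : 1 + t ≤ (1 + S / μ) * (1 + β ^ 2) := by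
    have : t ≤ S / μ * β ^ 2 := by rw [div_mul_eq_mul_div, le_div_iff₀ hμ]; linarith
    nlinarith [sq_nonneg β, div_nonneg hS hμ.le]
  calc (8 / μ + 2 * t) * (1 + r) ^ n ≤ (8 / μ + 2) * (1 + t) * (2 * (1 + t)) ^ n := by
        gcongr
    _ = (8 / μ + 2) * 2 ^ n * (1 + t) ^ (n + 1) := by rw [mul_pow]; ring
    _ ≤ (8 / μ + 2) * 2 ^ n * ((1 + S / μ) * (1 + β ^ 2)) ^ (n + 1) := by gcongr
    _ = _ := by rw [mul_pow]; ring

theorem integrable_exp_neg_mul_sum_sq {c : ℝ} (hc : 0 < c) :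
    Integrable fun x : ι → ℝ ↦ exp (-c * ∑ i, x i ^ 2) := by
  simp only [Finset.mul_sum, Real.exp_sum]
  exact Integrable.fintype_prod (f := fun _ t ↦ exp (-c * t ^ 2))
    fun _ ↦ integrable_exp_neg_mul_sq hc

theorem setIntegral_sum_sq_mul_exp_le {q : (ι → ℝ) → ℝ} {s : Set (ι → ℝ)} {p : ι → ℝ} {μ : ℝ}
    (hs : MeasurableSet s) (hμ : 0 < μ) (hq : ∀ x ∈ s, q p + μ * ∑ i, (x i - p i) ^ 2 ≤ q x) :
    ∫ x in s, (∑ i, x i ^ 2) * exp (-(1 / 2) * q x) ≤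
      exp (-(1 / 2) * q p) * (8 / μ + 2 * ∑ i, p i ^ 2) *
        ∫ x : ι → ℝ, exp (-(μ / 4) * ∑ i, x i ^ 2) := by
  set G : (ι → ℝ) → ℝ := fun y ↦ exp (-(μ / 4) * ∑ i, y i ^ 2)
  set K := exp (-(1 / 2) * q p) * (8 / μ + 2 * ∑ i, p i ^ 2)
  have hG : Integrable G := integrable_exp_neg_mul_sum_sq (by positivity)
  have hK : 0 ≤ K := by positivity
  -- Half of the Gaussian decay absorbs the polynomial factor `∑ (xᵢ - pᵢ)²`.
  have hbound : ∀ x ∈ s, (∑ i, x i ^ 2) * exp (-(1 / 2) * q x) ≤ K * G (x - p) := by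
    intro x hx
    set t := ∑ i, (x i - p i) ^ 2
    have ht : 0 ≤ t := by positivity
    have hsum : ∑ i, x i ^ 2 ≤ 2 * t + 2 * ∑ i, p i ^ 2 := by
      simpa using sum_sq_add_le (fun i ↦ x i - p i) p
    have hexp : exp (-(1 / 2) * q x) ≤ exp (-(1 / 2) * q p) * exp (-(2 * (μ / 4)) * t) := by
      rw [← exp_add]; gcongr; linarith [hq x hx]
    have htail := mul_exp_neg_two_mul_le (c := μ / 4) (by positivity) t
    have hGxp : G (x - p) = exp (-(μ / 4) * t) := by simp only [G, t, Pi.sub_apply]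
    have hdecay : exp (-(2 * (μ / 4)) * t) ≤ exp (-(μ / 4) * t) := by gcongr; linarith
    calc (∑ i, x i ^ 2) * exp (-(1 / 2) * q x)
        ≤ (2 * t + 2 * ∑ i, p i ^ 2) * (exp (-(1 / 2) * q p) * exp (-(2 * (μ / 4)) * t)) := by
          gcongr
      _ = exp (-(1 / 2) * q p) * (2 * (t * exp (-(2 * (μ / 4)) * t)) +
            2 * (∑ i, p i ^ 2) * exp (-(2 * (μ / 4)) * t)) := by ring
      _ ≤ exp (-(1 / 2) * q p) * (2 * ((μ / 4)⁻¹ * exp (-(μ / 4) * t)) +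
            2 * (∑ i, p i ^ 2) * exp (-(μ / 4) * t)) := by gcongr
      _ = K * G (x - p) := by simp only [hGxp, K]; field_simp; ring
  calc ∫ x in s, (∑ i, x i ^ 2) * exp (-(1 / 2) * q x)
      ≤ ∫ x in s, K * G (x - p) := by
        refine integral_mono_of_nonneg (Eventually.of_forall fun x ↦ by positivity)
          ((hG.comp_sub_right p).const_mul K).integrableOn (ae_restrict_of_forall_mem hs hbound)
    _ ≤ ∫ x, K * G (x - p) :=
        setIntegral_le_integral ((hG.comp_sub_right p).const_mul K)
          (Eventually.of_forall fun x ↦ by positivity)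
    _ = K * ∫ x, G x := by rw [integral_const_mul, integral_sub_right_eq_self]

namespace Matrix

theorem IsSymm.dotProduct_mulVec_add {R : Type*} [CommRing R] {A : Matrix ι ι R} (hA : A.IsSymm)
    (x y : ι → R) :
    (x + y) ⬝ᵥ A *ᵥ (x + y) = x ⬝ᵥ A *ᵥ x + 2 * (x ⬝ᵥ A *ᵥ y) + y ⬝ᵥ A *ᵥ y := by
  have hyx : y ⬝ᵥ A *ᵥ x = x ⬝ᵥ A *ᵥ y := by
    rw [dotProduct_mulVec, ← mulVec_transpose, hA.eq, dotProduct_comm]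
  simp only [mulVec_add, dotProduct_add, add_dotProduct, hyx]
  ring

theorem IsSymm.dotProduct_mulVec_add_smul {A : Matrix ι ι ℝ} (hA : A.IsSymm)
    (x y : ι → ℝ) (t : ℝ) :
    (x + t • y) ⬝ᵥ A *ᵥ (x + t • y) =
      x ⬝ᵥ A *ᵥ x + t * (2 * (x ⬝ᵥ A *ᵥ y)) + t ^ 2 * (y ⬝ᵥ A *ᵥ y) := by
  rw [hA.dotProduct_mulVec_add]
  simp only [mulVec_smul, dotProduct_smul, smul_dotProduct, smul_eq_mul]
  ring

theorem abs_dotProduct_mulVec_le (A : Matrix ι ι ℝ) (x y : ι → ℝ) :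
    |x ⬝ᵥ A *ᵥ y| ≤ (∑ i, ∑ j, |A i j|) * ‖x‖ * ‖y‖ := by
  have hexp : x ⬝ᵥ A *ᵥ y = ∑ i, ∑ j, x i * A i j * y j := by
    simp only [dotProduct, mulVec, Finset.mul_sum, mul_assoc]
  rw [hexp, Finset.sum_mul, Finset.sum_mul]
  refine (Finset.abs_sum_le_sum_abs _ _).trans (Finset.sum_le_sum fun i _ ↦ ?_)
  rw [Finset.sum_mul, Finset.sum_mul]
  refine (Finset.abs_sum_le_sum_abs _ _).trans (Finset.sum_le_sum fun j _ ↦ ?_)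
  rw [abs_mul, abs_mul]
  have hx := norm_le_pi_norm x i
  have hy := norm_le_pi_norm y j
  rw [Real.norm_eq_abs] at hx hy
  calc |x i| * |A i j| * |y j| = |A i j| * |x i| * |y j| := by ring
    _ ≤ |A i j| * ‖x‖ * ‖y‖ := by gcongr

theorem IsSymm.dotProduct_mulVec_le_add_of_norm_sub_le {A : Matrix ι ι ℝ} (hA : A.IsSymm)
    {p x : ι → ℝ} (hx : ‖x - p‖ ≤ (1 + ‖p‖)⁻¹) :
    x ⬝ᵥ A *ᵥ x ≤ p ⬝ᵥ A *ᵥ p + 3 * ∑ i, ∑ j, |A i j| := by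
  set S := ∑ i, ∑ j, |A i j|
  have hS : 0 ≤ S := by positivity
  have hy1 : ‖x - p‖ ≤ 1 := hx.trans (inv_le_one_of_one_le₀ (by linarith [norm_nonneg p]))
  have hpy : ‖p‖ * ‖x - p‖ ≤ 1 :=
    calc ‖p‖ * ‖x - p‖ ≤ (1 + ‖p‖) * (1 + ‖p‖)⁻¹ := by gcongr; linarith
      _ = 1 := mul_inv_cancel₀ (by positivity)
  have hcross := (abs_le.1 (abs_dotProduct_mulVec_le A p (x - p))).2
  have hquad := (abs_le.1 (abs_dotProduct_mulVec_le A (x - p) (x - p))).2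
  have hexp := hA.dotProduct_mulVec_add p (x - p)
  rw [add_sub_cancel] at hexp
  have h1 : S * ‖p‖ * ‖x - p‖ ≤ S := by
    rw [mul_assoc]; exact mul_le_of_le_one_right hS hpy
  have h2 : S * ‖x - p‖ * ‖x - p‖ ≤ S := by
    rw [mul_assoc]; exact mul_le_of_le_one_right hS (mul_le_one₀ hy1 (norm_nonneg _) hy1)
  linarith

theorem continuous_dotProduct_mulVec (A : Matrix ι ι ℝ) :
    Continuous fun x : ι → ℝ ↦ x ⬝ᵥ A *ᵥ x := by
  fun_prop

theorem PosDef.exists_pos_mul_sum_sq_le {A : Matrix ι ι ℝ} (hA : A.PosDef) :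
    ∃ μ > 0, ∀ x : ι → ℝ, μ * ∑ i, x i ^ 2 ≤ x ⬝ᵥ A *ᵥ x := by
  set sphere := {x : ι → ℝ | ∑ i, x i ^ 2 = 1}
  have hsphere : IsCompact sphere := by
    refine Metric.isCompact_of_isClosed_isBounded (isClosed_eq (by fun_prop) continuous_const)
      ((Metric.isBounded_closedBall (x := 0) (r := 1)).subset fun x hx ↦ ?_)
    rw [mem_closedBall_zero_iff, ← sq_le_one_iff₀ (norm_nonneg x)]
    exact (norm_sq_le_sum_sq x).trans hx.le
  obtain ⟨μ, hμ, hμS⟩ := hsphere.exists_forall_le' (A.continuous_dotProduct_mulVec).continuousOn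
    (a := 0) fun x hx ↦ by
      have hx0 : x ≠ 0 := by rintro rfl; simp [sphere] at hx
      simpa using hA.dotProduct_mulVec_pos hx0
  refine ⟨μ, hμ, fun x ↦ ?_⟩
  have hsum := Finset.sum_nonneg fun i (_ : i ∈ Finset.univ) ↦ sq_nonneg (x i)
  rcases hsum.eq_or_lt with hx | hx
  · rw [← hx, mul_zero]
    simpa using hA.posSemidef.dotProduct_mulVec_nonneg x
  set r := √(∑ i, x i ^ 2)
  have hr : 0 < r := sqrt_pos.2 hx
  have hr2 : r ^ 2 = ∑ i, x i ^ 2 := sq_sqrt hsum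
  have hy : r⁻¹ • x ∈ sphere := by
    simp only [sphere, mem_ofPred_eq, Pi.smul_apply, smul_eq_mul, mul_pow, ← Finset.mul_sum, ← hr2]
    field_simp
  calc μ * ∑ i, x i ^ 2 = r ^ 2 * μ := by rw [hr2, mul_comm]
    _ ≤ r ^ 2 * ((r⁻¹ • x) ⬝ᵥ A *ᵥ (r⁻¹ • x)) := by gcongr; exact hμS _ hy
    _ = x ⬝ᵥ A *ᵥ x := by
      simp only [mulVec_smul, dotProduct_smul, smul_dotProduct, smul_eq_mul]
      field_simp

theorem PosDef.tendsto_dotProduct_mulVec_cocompact {A : Matrix ι ι ℝ} (hA : A.PosDef) :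
    Tendsto (fun x : ι → ℝ ↦ x ⬝ᵥ A *ᵥ x) (cocompact _) atTop := by
  obtain ⟨μ, hμ, hμA⟩ := hA.exists_pos_mul_sum_sq_le
  refine tendsto_atTop_mono (fun x ↦ (mul_le_mul_of_nonneg_left (norm_sq_le_sum_sq x) hμ.le).trans
    (hμA x)) ?_
  exact ((tendsto_pow_atTop two_ne_zero).const_mul_atTop hμ).comp tendsto_norm_cocompact_atTop

theorem PosDef.exists_isMinOn_dotProduct_mulVec {A : Matrix ι ι ℝ} (hA : A.PosDef)
    {s : Set (ι → ℝ)} (hs : IsClosed s) {x₀ : ι → ℝ} (hx₀ : x₀ ∈ s) :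
    ∃ p ∈ s, IsMinOn (fun x ↦ x ⬝ᵥ A *ᵥ x) s p :=
  A.continuous_dotProduct_mulVec.continuousOn.exists_isMinOn' hs hx₀
    ((hA.tendsto_dotProduct_mulVec_cocompact.eventually_ge_atTop _).filter_mono inf_le_left)

theorem IsSymm.dotProduct_mulVec_add_le_of_isMinOn {A : Matrix ι ι ℝ} (hA : A.IsSymm)
    {s : Set (ι → ℝ)} (hs : Convex ℝ s) {p x : ι → ℝ} (hp : p ∈ s) (hx : x ∈ s)
    (hmin : IsMinOn (fun x ↦ x ⬝ᵥ A *ᵥ x) s p) :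
    p ⬝ᵥ A *ᵥ p + (x - p) ⬝ᵥ A *ᵥ (x - p) ≤ x ⬝ᵥ A *ᵥ x := by
  set w := x - p
  have hslope : ∀ t ∈ Ioc (0 : ℝ) 1, 0 ≤ 2 * (p ⬝ᵥ A *ᵥ w) + t * (w ⬝ᵥ A *ᵥ w) := by
    rintro t ⟨ht0, ht1⟩
    have := hmin (hs.add_smul_sub_mem hp hx ⟨ht0.le, ht1⟩)
    simp only [mem_ofPred_eq, hA.dotProduct_mulVec_add_smul] at this
    nlinarith
  have hlim : Tendsto (fun t ↦ 2 * (p ⬝ᵥ A *ᵥ w) + t * (w ⬝ᵥ A *ᵥ w)) (𝓝[>] 0)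
      (𝓝 (2 * (p ⬝ᵥ A *ᵥ w) + 0 * (w ⬝ᵥ A *ᵥ w))) :=
    (Continuous.tendsto (by fun_prop) _).mono_left nhdsWithin_le_nhds
  have hcross : 0 ≤ 2 * (p ⬝ᵥ A *ᵥ w) := by
    simpa using ge_of_tendsto hlim (eventually_of_mem (Ioc_mem_nhdsGT one_pos) hslope)
  have := hA.dotProduct_mulVec_add p w
  rw [add_sub_cancel] at this
  linarith

theorem PosDef.integrable_exp_neg_mul_dotProduct_mulVec {A : Matrix ι ι ℝ} (hA : A.PosDef)
    {c : ℝ} (hc : 0 < c) : Integrable fun x : ι → ℝ ↦ exp (-c * (x ⬝ᵥ A *ᵥ x)) := by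
  obtain ⟨μ, hμ, hμA⟩ := hA.exists_pos_mul_sum_sq_le
  refine (integrable_exp_neg_mul_sum_sq (mul_pos hc hμ)).mono'
    (by fun_prop) (Eventually.of_forall fun x ↦ ?_)
  rw [norm_of_nonneg (exp_pos _).le, exp_le_exp]
  linarith [mul_le_mul_of_nonneg_left (hμA x) hc.le]

theorem PosDef.le_setIntegral_exp_dotProduct_mulVec {A : Matrix ι ι ℝ} (hA : A.PosDef)
    {b p : ι → ℝ} (hp : p ≤ b) :
    exp (-(1 / 2) * (p ⬝ᵥ A *ᵥ p)) /
        (exp (3 / 2 * ∑ i, ∑ j, |A i j|) * (1 + ‖p‖) ^ Fintype.card ι) ≤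
      ∫ x in {x : ι → ℝ | ∀ i, x i < b i}, exp (-(1 / 2) * (x ⬝ᵥ A *ᵥ x)) := by
  set ε := (1 + ‖p‖)⁻¹
  have hε : 0 < ε := by positivity
  set cube := univ.pi fun i ↦ Ioo (p i - ε) (p i)
  have hcube : cube ⊆ {x | ∀ i, x i < b i} := fun x hx i ↦ (hx i (mem_univ i)).2.trans_le (hp i)
  have hvol : volume cube = ENNReal.ofReal ε ^ Fintype.card ι := by
    simp [cube, volume_pi_pi, Real.volume_Ioo]
  have hlower : ∀ x ∈ cube, exp (-(1 / 2) * (p ⬝ᵥ A *ᵥ p) - 3 / 2 * ∑ i, ∑ j, |A i j|) ≤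
      exp (-(1 / 2) * (x ⬝ᵥ A *ᵥ x)) := by
    intro x hx
    have hxp : ‖x - p‖ ≤ ε := (pi_norm_le_iff_of_nonneg hε.le).2 fun i ↦ by
      have := hx i (mem_univ i)
      rw [Pi.sub_apply, Real.norm_eq_abs, abs_le]
      constructor <;> linarith [this.1, this.2]
    have := (isHermitian_iff_isSymm.1 hA.isHermitian).dotProduct_mulVec_le_add_of_norm_sub_le hxp
    gcongr
    linarith
  have hint := (hA.integrable_exp_neg_mul_dotProduct_mulVec (c := 1 / 2) (by norm_num))
  calc _ = exp (-(1 / 2) * (p ⬝ᵥ A *ᵥ p) - 3 / 2 * ∑ i, ∑ j, |A i j|) * (volume cube).toReal := by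
        rw [hvol, ENNReal.toReal_pow, ENNReal.toReal_ofReal hε.le, exp_sub, inv_pow]
        field_simp
    _ ≤ ∫ x in cube, exp (-(1 / 2) * (x ⬝ᵥ A *ᵥ x)) :=
        setIntegral_ge_of_const_le_real (MeasurableSet.univ_pi fun _ ↦ measurableSet_Ioo)
          (by simp [hvol]) hlower hint.integrableOn
    _ ≤ _ := setIntegral_mono_set hint.integrableOn
        (Eventually.of_forall fun _ ↦ (exp_pos _).le) hcube.eventuallyLE

end Matrix

theorem IsMinOn.dotProduct_mulVec_le_mul_sq_iInf {A : Matrix ι ι ℝ} {b p : ι → ℝ}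
    (hmin : IsMinOn (fun x ↦ x ⬝ᵥ A *ᵥ x) (Iic b) p) :
    p ⬝ᵥ A *ᵥ p ≤ (∑ i, ∑ j, |A i j|) * (⨅ i, b i) ^ 2 := by
  set c := b ⊓ 0
  have hc : ‖c‖ ≤ |⨅ i, b i| := (pi_norm_le_iff_of_nonneg (abs_nonneg _)).2 fun i ↦ by
    have := ciInf_le (Finite.bddBelow (finite_range b)) i
    rcases le_total (b i) 0 with h | h
    · rw [show c i = b i from inf_eq_left.2 h, Real.norm_eq_abs, abs_of_nonpos h]
      linarith [neg_abs_le (⨅ i, b i)]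
    · simp [c, inf_eq_right.2 h]
  calc p ⬝ᵥ A *ᵥ p ≤ c ⬝ᵥ A *ᵥ c := hmin (inf_le_left : c ≤ b)
    _ ≤ (∑ i, ∑ j, |A i j|) * ‖c‖ * ‖c‖ :=
        (le_abs_self _).trans (Matrix.abs_dotProduct_mulVec_le A c c)
    _ ≤ (∑ i, ∑ j, |A i j|) * |⨅ i, b i| * |⨅ i, b i| := by gcongr
    _ = (∑ i, ∑ j, |A i j|) * (⨅ i, b i) ^ 2 := by rw [mul_assoc, abs_mul_abs_self, sq]

theorem Matrix.PosDef.exists_setIntegral_sum_sq_mul_exp_div_le {A : Matrix ι ι ℝ} (hA : A.PosDef) :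
    ∃ C > 0, ∀ b : ι → ℝ,
      (∫ x in {x : ι → ℝ | ∀ i, x i < b i}, (∑ i, x i ^ 2) * exp (-(1 / 2) * (x ⬝ᵥ A *ᵥ x))) /
        (∫ x in {x : ι → ℝ | ∀ i, x i < b i}, exp (-(1 / 2) * (x ⬝ᵥ A *ᵥ x))) ≤
      C * (1 + (⨅ i, b i) ^ 2) ^ (Fintype.card ι + 1) := by
  obtain ⟨μ, hμ, hμA⟩ := hA.exists_pos_mul_sum_sq_le
  set S := ∑ i, ∑ j, |A i j|
  set n := Fintype.card ι
  set G := ∫ x : ι → ℝ, exp (-(μ / 4) * ∑ i, x i ^ 2) with hGdef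
  have hG : 0 < G := integral_exp_pos (integrable_exp_neg_mul_sum_sq (by positivity))
  refine ⟨(8 / μ + 2) * 2 ^ n * (1 + S / μ) ^ (n + 1) * G * exp (3 / 2 * S), by positivity,
    fun b ↦ ?_⟩
  set box := {x : ι → ℝ | ∀ i, x i < b i}
  obtain ⟨p, hp, hmin⟩ := hA.exists_isMinOn_dotProduct_mulVec isClosed_Iic (le_refl b)
  have hbox : MeasurableSet box := by
    simp only [box, ofPred_forall]
    exact MeasurableSet.iInter fun i ↦ measurableSet_lt (measurable_pi_apply i) measurable_const
  have hnum := setIntegral_sum_sq_mul_exp_le (q := fun x ↦ x ⬝ᵥ A *ᵥ x) (p := p) hbox hμ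
    fun x hx ↦ by
      have := (isHermitian_iff_isSymm.1 hA.isHermitian).dotProduct_mulVec_add_le_of_isMinOn
        (convex_Iic b) hp (fun i ↦ (hx i).le) hmin
      have hcoer := hμA (x - p)
      simp only [Pi.sub_apply] at hcoer
      linarith
  have hden := hA.le_setIntegral_exp_dotProduct_mulVec hp
  have hpoly := eight_div_add_mul_one_add_pow_le n hμ (by positivity) (norm_nonneg p)
    (norm_sq_le_sum_sq p) ((hμA p).trans hmin.dotProduct_mulVec_le_mul_sq_iInf)
  calc _ ≤ (exp (-(1 / 2) * (p ⬝ᵥ A *ᵥ p)) * (8 / μ + 2 * ∑ i, p i ^ 2) * G) /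
        (exp (-(1 / 2) * (p ⬝ᵥ A *ᵥ p)) / (exp (3 / 2 * S) * (1 + ‖p‖) ^ n)) :=
        div_le_div₀ (by positivity) hnum (by positivity) hden
    _ = ((8 / μ + 2 * ∑ i, p i ^ 2) * (1 + ‖p‖) ^ n) * (G * exp (3 / 2 * S)) := by
        field_simp
    _ ≤ ((8 / μ + 2) * 2 ^ n * (1 + S / μ) ^ (n + 1) * (1 + (⨅ i, b i) ^ 2) ^ (n + 1)) *
        (G * exp (3 / 2 * S)) := by gcongr
    _ = _ := by ring

end

theorem stmt17_general {m : ℕ} (R : Matrix (Fin m) (Fin m) ℝ) (hR : R.PosDef) :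
    ∃ C : ℝ, 0 < C ∧ ∀ b : Fin m → ℝ,
      (∫ x in {x : Fin m → ℝ | ∀ i, x i < b i},
          (∑ i, (x i) ^ 2) * Real.exp (-(1/2) * (x ⬝ᵥ (R⁻¹ *ᵥ x))))
        / (∫ x in {x : Fin m → ℝ | ∀ i, x i < b i},
            Real.exp (-(1/2) * (x ⬝ᵥ (R⁻¹ *ᵥ x))))
        ≤ C * (1 + (⨅ i, b i) ^ 2) ^ (m + 1) := by
  simpa using hR.inv.exists_setIntegral_sum_sq_mul_exp_div_le

/-- the Gaussian box moment-ratio bound used for the Hüsler–Reiss model.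
For a positive definite `m × m` matrix `R̂` there is `C > 0` such that for all
`b ∈ ℝ^m`, with `b_min = min_i b_i`,
`(∫_{∏(−∞,bᵢ)} ‖x‖₂² e^{−½ xᵀ R̂⁻¹ x} dx) / (∫_{∏(−∞,bᵢ)} e^{−½ xᵀ R̂⁻¹ x} dx)
  ≤ C (1 + b_min²)^{m+1}`. -/
theorem stmt17 {m : ℕ} (hm : 1 ≤ m) (R : Matrix (Fin m) (Fin m) ℝ) (hR : R.PosDef) :
    ∃ C : ℝ, 0 < C ∧ ∀ b : Fin m → ℝ,
      (∫ x in {x : Fin m → ℝ | ∀ i, x i < b i},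
          (∑ i, (x i) ^ 2) * Real.exp (-(1/2) * (x ⬝ᵥ (R⁻¹ *ᵥ x))))
        / (∫ x in {x : Fin m → ℝ | ∀ i, x i < b i},
            Real.exp (-(1/2) * (x ⬝ᵥ (R⁻¹ *ᵥ x))))
        ≤ C * (1 + (⨅ i, b i) ^ 2) ^ (m + 1) :=
  stmt17_general R hR
end
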